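/- arXiv:2501.01294 — 9 statements merged into one kernel-verified Lean document; each statement's English description precedes it below -/
import Mathlib

section
/- Let d, m, s be integers with d ≥ m ≥ 3 and m - 2 ≥ s ≥ 0. Define r' = max{a ∈ ℕ₀ : a ≤ s and 2^a ≤ m-1} and r = max{a ∈ ℕ₀ : a ≤ s+1 and 2^a ≤ m}. Then (m-1-s)/(d+1-r) - 1/2 ≤ (m-2-s)/(d+1-r'). -/
theorem findGreatest_frac_ineq (d m s : ℕ) (hm : 3 ≤ m) (hmd : m ≤ d)
    (hs : s + 2 ≤ m) :
    ((m : ℚ) - 1 - (s : ℚ)) /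
        ((d : ℚ) + 1 - (Nat.findGreatest (fun a => 2 ^ a ≤ m) (s + 1) : ℚ)) - 1 / 2 ≤
      ((m : ℚ) - 2 - (s : ℚ)) /
        ((d : ℚ) + 1 - (Nat.findGreatest (fun a => 2 ^ a ≤ m - 1) s : ℚ)) := by
  set r := Nat.findGreatest (fun a => 2 ^ a ≤ m) (s + 1) with hrdef
  set r' := Nat.findGreatest (fun a => 2 ^ a ≤ m - 1) s with hr'def
  have hr_le : r ≤ s + 1 := Nat.findGreatest_le _
  have hr'_le : r' ≤ s := Nat.findGreatest_le _
  have h1 : r' ≤ r := by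
    rcases Nat.eq_zero_or_pos r' with h | h
    · omega
    · have hspec : 2 ^ r' ≤ m - 1 := Nat.findGreatest_of_ne_zero (P := fun a => 2 ^ a ≤ m - 1) hr'def.symm (by omega)
      exact Nat.le_findGreatest (by omega) (by omega)
  have h2 : r ≤ r' + 1 := by
    rcases Nat.eq_zero_or_pos r with h | h
    · omega
    · have hspec : 2 ^ r ≤ m := Nat.findGreatest_of_ne_zero (P := fun a => 2 ^ a ≤ m) hrdef.symm (by omega)
      have h3 : 2 ^ (r - 1) ≤ m - 1 := by
        have : 2 ^ (r - 1) < 2 ^ r := Nat.pow_lt_pow_right (by norm_num) (by omega)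
        omega
      have : r - 1 ≤ r' := Nat.le_findGreatest (by omega) h3
      omega
  have hrd : r + 1 ≤ d := by omega
  have hAD : m + r ≤ d + s + 1 := by omega
  have hrdq : (r : ℚ) + 1 ≤ d := by exact_mod_cast hrd
  have hDpos : (0 : ℚ) < (d : ℚ) + 1 - r := by linarith
  have hD2 : (2 : ℚ) ≤ (d : ℚ) + 1 - r := by linarith
  have hA : (m : ℚ) - 1 - s ≤ (d : ℚ) + 1 - r - 1 := by
    have : (m : ℚ) + r ≤ (d : ℚ) + s + 1 := by exact_mod_cast hAD
    linarith
  rcases (by omega : r' = r ∨ r' + 1 = r) with hc | hc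
  · rw [hc]
    rw [div_sub_div _ _ (ne_of_gt hDpos) (by norm_num), div_le_div_iff₀ (by positivity) hDpos]
    nlinarith [hDpos, hD2]
  · have hcq : (r' : ℚ) = (r : ℚ) - 1 := by
      have h := congrArg (fun n : ℕ => (n : ℚ)) hc
      push_cast at h
      linarith
    rw [hcq]
    have hD'pos : (0 : ℚ) < (d : ℚ) + 1 - ((r : ℚ) - 1) := by linarith
    rw [div_sub_div _ _ (ne_of_gt hDpos) (by norm_num), div_le_div_iff₀ (by positivity) hD'pos]
    nlinarith [hDpos, hD2, hA]
end

section
/- Let d, m, s be integers with d ≥ m ≥ 3 and m - 2 ≥ s ≥ 0. Define r' = max{a ∈ ℕ₀ : a ≤ s and 2^a ≤ m-1} and r = max{a ∈ ℕ₀ : a ≤ s+1 and 2^a ≤ m}. Then (s+1)·(s/d + (m-2-s)/(d+1-r')) + (d-s)·((s+1)/d + (m-2-s)/(d+1-r) - 1/2) ≤ m - 2. -/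
/-! With `x = d + 1 - r'`, `y = d + 1 - r` and `M = m - 2 - s`, the claim rearranges to
`M * ((s + 1) / x + (d - s) / y - 1) ≤ (d - s - 2) / 2`. As `r ≤ s + 1` and `y ≤ x`, the bracket
is at most `r / x`, and `M * r / x ≤ (d - s - 2) / 2` because `M ≤ d - s - 2` and `2 r ≤ x`.
That last inequality `2 r + r' ≤ d + 1` is where the powers of two enter: `2 ^ r ≤ m ≤ d`,
`2 ^ r' < m` and `3 k ≤ 2 ^ k + 2`. -/

theorem three_mul_le_two_pow_add_two (k : ℕ) : 3 * k ≤ 2 ^ k + 2 := by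
  induction k with
  | zero => simp
  | succ k ih =>
    rcases Nat.lt_or_ge k 2 with hk | hk
    · interval_cases k <;> norm_num
    · have : 2 ^ 2 ≤ 2 ^ k := Nat.pow_le_pow_right two_pos hk
      rw [pow_succ]
      omega

theorem two_mul_add_le_of_two_pow_lt {a b n : ℕ} (hab : a ≤ b) (ha : 2 ^ a < n) (hb : 2 ^ b ≤ n) :
    2 * b + a ≤ n + 1 := by
  have := three_mul_le_two_pow_add_two b
  rcases hab.lt_or_eq with hlt | rfl <;> omega

theorem frac_ineq_of_two_mul_add_le {K : Type*} [Field K] [LinearOrder K] [IsStrictOrderedRing K]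
    {d m s r r' : K} (hs : 0 ≤ s) (hsm : s + 2 ≤ m) (hmd : m ≤ d) (hr'r : r' ≤ r)
    (hrs : r ≤ s + 1) (hkey : 2 * r + r' ≤ d + 1) :
    (s + 1) * (s / d + (m - 2 - s) / (d + 1 - r')) +
      (d - s) * ((s + 1) / d + (m - 2 - s) / (d + 1 - r) - 1 / 2) ≤ m - 2 := by
  set x := d + 1 - r'
  set y := d + 1 - r
  have hd : 0 < d := by linarith
  have hy : 0 < y := by linarith
  have hx : 0 < x := by linarith
  have hcoef : (s + 1) / x + (d - s) / y - 1 ≤ r / x := by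
    have hrest : (d - s) / y - 1 = -((s + 1 - r) / y) := by field_simp; ring
    have hmono : (s + 1 - r) / x ≤ (s + 1 - r) / y :=
      div_le_div_of_nonneg_left (sub_nonneg.2 hrs) hy (by linarith)
    have : (s + 1) / x - (s + 1 - r) / x = r / x := by ring
    linarith
  have hrx : (m - 2 - s) * (r / x) ≤ (d - s - 2) / 2 := by
    rw [mul_div_assoc', div_le_div_iff₀ hx two_pos]
    nlinarith
  calc (s + 1) * (s / d + (m - 2 - s) / x) + (d - s) * ((s + 1) / d + (m - 2 - s) / y - 1 / 2)
      = (s + 1) + (m - 2 - s) * ((s + 1) / x + (d - s) / y - 1) + (m - 2 - s) - (d - s) / 2 := by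
        field_simp; ring
    _ ≤ (s + 1) + (m - 2 - s) * (r / x) + (m - 2 - s) - (d - s) / 2 := by
        gcongr; linarith
    _ ≤ m - 2 := by linarith

theorem findGreatest_frac_ineq2_general (d m s : ℕ) (hmd : m ≤ d)
    (hs : s + 2 ≤ m) :
    ((s : ℚ) + 1) * ((s : ℚ) / (d : ℚ) +
        ((m : ℚ) - 2 - (s : ℚ)) /
          ((d : ℚ) + 1 - (Nat.findGreatest (fun a => 2 ^ a ≤ m - 1) s : ℚ))) +
      ((d : ℚ) - (s : ℚ)) * (((s : ℚ) + 1) / (d : ℚ) +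
        ((m : ℚ) - 2 - (s : ℚ)) /
          ((d : ℚ) + 1 - (Nat.findGreatest (fun a => 2 ^ a ≤ m) (s + 1) : ℚ)) - 1 / 2) ≤
      (m : ℚ) - 2 := by
  set r' := Nat.findGreatest (fun a => 2 ^ a ≤ m - 1) s
  set r := Nat.findGreatest (fun a => 2 ^ a ≤ m) (s + 1)
  have hr'r : r' ≤ r := Nat.findGreatest_mono (fun a h => by omega) (by omega)
  have hrs : r ≤ s + 1 := Nat.findGreatest_le _
  have hr'm : 2 ^ r' ≤ m - 1 :=
    Nat.findGreatest_spec (P := fun a => 2 ^ a ≤ m - 1) (Nat.zero_le s) (by rw [pow_zero]; omega)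
  have hrm : 2 ^ r ≤ m :=
    Nat.findGreatest_spec (P := fun a => 2 ^ a ≤ m) (Nat.zero_le _) (by rw [pow_zero]; omega)
  have hkey : 2 * r + r' ≤ d + 1 := by
    have := two_mul_add_le_of_two_pow_lt hr'r (by omega) hrm
    omega
  apply frac_ineq_of_two_mul_add_le (Nat.cast_nonneg s) <;> exact_mod_cast ‹_›

theorem findGreatest_frac_ineq2 (d m s : ℕ) (hm : 3 ≤ m) (hmd : m ≤ d)
    (hs : s + 2 ≤ m) :
    ((s : ℚ) + 1) * ((s : ℚ) / (d : ℚ) +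
        ((m : ℚ) - 2 - (s : ℚ)) /
          ((d : ℚ) + 1 - (Nat.findGreatest (fun a => 2 ^ a ≤ m - 1) s : ℚ))) +
      ((d : ℚ) - (s : ℚ)) * (((s : ℚ) + 1) / (d : ℚ) +
        ((m : ℚ) - 2 - (s : ℚ)) /
          ((d : ℚ) + 1 - (Nat.findGreatest (fun a => 2 ^ a ≤ m) (s + 1) : ℚ)) - 1 / 2) ≤
      (m : ℚ) - 2 :=
  findGreatest_frac_ineq2_general d m s hmd hs
end

section
/- Let d, m, r, s be nonnegative integers with d ≥ m ≥ 3, m - 1 ≥ s + 1 ≥ r, and m ≥ 2^r. Then (s+1)/d + (m-2-s)/(d+1-r) - 1/2 ≤ (m-2)/(d+1). -/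
theorem frac_ineq (d m r s : ℕ) (hm : 3 ≤ m) (hmd : m ≤ d)
    (hs : s + 1 ≤ m - 1) (hr : r ≤ s + 1) (h2r : 2 ^ r ≤ m) :
    ((s : ℚ) + 1) / (d : ℚ) + ((m : ℚ) - 2 - (s : ℚ)) / ((d : ℚ) + 1 - (r : ℚ)) - 1 / 2 ≤
      ((m : ℚ) - 2) / ((d : ℚ) + 1) := by
  have hsm : s + 2 ≤ m := by omega
  have h2r' : 2 * r ≤ m := by
    refine le_trans ?_ h2r
    clear h2r hr hs
    induction r with
    | zero => simp
    | succ n ih => have := Nat.one_le_two_pow (n := n); omega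
  have hA : (0:ℚ) ≤ (d:ℚ) - m := by
    have : (m:ℚ) ≤ d := by exact_mod_cast hmd
    linarith
  have hB : (0:ℚ) ≤ (m:ℚ) - 3 := by
    have : (3:ℚ) ≤ m := by exact_mod_cast hm
    linarith
  have hC : (0:ℚ) ≤ (m:ℚ) - 2 - s := by
    have : (s:ℚ) + 2 ≤ m := by exact_mod_cast hsm
    linarith
  have hE : (0:ℚ) ≤ (s:ℚ) + 1 - r := by
    have : (r:ℚ) ≤ s + 1 := by exact_mod_cast hr
    linarith
  have hG : (0:ℚ) ≤ (m:ℚ) - 2*r := by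
    have : 2*(r:ℚ) ≤ m := by exact_mod_cast h2r'
    linarith
  have hr0 : (0:ℚ) ≤ (r:ℚ) := by positivity
  have hs0 : (0:ℚ) ≤ (s:ℚ) := by positivity
  have hd0 : (0:ℚ) < (d:ℚ) := by linarith
  have hd1 : (0:ℚ) < (d:ℚ) + 1 := by linarith
  have hdr : (0:ℚ) < (d:ℚ) + 1 - (r:ℚ) := by linarith
  rw [div_add_div _ _ (ne_of_gt hd0) (ne_of_gt hdr),
    div_sub_div _ _ (by positivity : ((d:ℚ))*((d:ℚ)+1-(r:ℚ)) ≠ 0) (by norm_num : (2:ℚ) ≠ 0),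
    div_le_div_iff₀ (by positivity) hd1]
  nlinarith [mul_nonneg hA hC,
    mul_nonneg hB hE,
    mul_nonneg (mul_nonneg hG hG) hG,
    mul_nonneg hr0 hr0,
    mul_nonneg (mul_nonneg hA hB) hE,
    mul_nonneg (mul_nonneg hA hG) hG,
    mul_nonneg (mul_nonneg hG hG) hr0,
    mul_nonneg (mul_nonneg hB hE) hr0,
    mul_nonneg hE hr0,
    mul_nonneg (mul_nonneg hB hE) hG,
    mul_nonneg hB hG,
    mul_nonneg hG hG,
    mul_nonneg (mul_nonneg hA hA) hr0,
    mul_nonneg hB hr0,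
    mul_nonneg hA hE,
    mul_nonneg hC hr0,
    mul_nonneg (mul_nonneg hA hG) hr0,
    mul_nonneg (mul_nonneg hA hC) hG,
    mul_nonneg (mul_nonneg hC hG) hG,
    mul_nonneg (mul_nonneg hA hA) hA,
    mul_nonneg (mul_nonneg hA hA) hG,
    mul_nonneg (mul_nonneg hB hG) hr0,
    mul_nonneg (mul_nonneg hE hr0) hr0,
    mul_nonneg (mul_nonneg hA hr0) hr0]
end

section
/- For every integer d ≥ 2, the family 𝒮 = {A ⊆ [d+1] : |A| ≤ d-1} ∪ {A ⊆ [d+2, 2d+2] : |A| ≤ d-1} ∪ {{1, d+2}, [2, d+1], [d+3, 2d+2]} is a simplicial complex with |V(𝒮)| = 2(d+1), |𝒮| = 2(2^{d+1} - d - 1), and minimum degree 2^d - d. -/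
/-!
Write `A = [1, d+1]` and `B = [d+2, 2d+2]`. Then `𝒮` consists of the faces with at most `d - 1`
vertices of the simplices on `A` and on `B`, together with three "bridges" `{1, d+2}`, `A ∖ {1}`
and `B ∖ {d+2}`, which are too large for either skeleton and partition `A ∪ B`. Each skeleton has
`2^(d+1) - d - 2` faces (all subsets but the `d + 2` largest) and the two share only `∅`, which
gives `|𝒮|`. A vertex `x ∈ A` lies in one bridge and in the faces of the skeleton on `A` that
contain it; removing `x` identifies these with the `2^d - d - 1` faces with at most `d - 2`
vertices on `A ∖ {x}`, so every vertex has degree exactly `2^d - d`.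
-/

open Finset

variable {α : Type*}

/-- `m` counts vertices, not dimension: this is the `(m - 1)`-skeleton of the simplex on `T`. -/
def skeleton (T : Finset α) (m : ℕ) : Finset (Finset α) :=
  T.powerset.filter (·.card ≤ m)

@[simp]
lemma mem_skeleton {T F : Finset α} {m : ℕ} : F ∈ skeleton T m ↔ F ⊆ T ∧ F.card ≤ m := by
  simp [skeleton]

lemma mem_skeleton_of_subset {T X Y : Finset α} {m : ℕ} (hX : X ∈ skeleton T m) (hY : Y ⊆ X) :
    Y ∈ skeleton T m := by
  rw [mem_skeleton] at *
  exact ⟨hY.trans hX.1, (card_le_card hY).trans hX.2⟩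

lemma mem_skeleton_of_ssubset {T X Y : Finset α} {m : ℕ} (hX : X ⊆ T) (hXm : X.card ≤ m + 1)
    (hY : Y ⊂ X) : Y ∈ skeleton T m :=
  mem_skeleton.2 ⟨hY.subset.trans hX, by have := card_lt_card hY; omega⟩

lemma skeleton_empty (m : ℕ) : skeleton (∅ : Finset α) m = {∅} := by
  ext F; simp +contextual

variable [DecidableEq α]

lemma skeleton_inter (T T' : Finset α) (m : ℕ) :
    skeleton T m ∩ skeleton T' m = skeleton (T ∩ T') m := by
  ext F; simp only [mem_inter, mem_skeleton, subset_inter_iff]; tauto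

lemma skeleton_eq_biUnion (T : Finset α) (m : ℕ) :
    skeleton T m = (range (m + 1)).biUnion (powersetCard · T) := by
  ext F; simp [mem_powersetCard, and_comm]

lemma card_skeleton (T : Finset α) (m : ℕ) :
    (skeleton T m).card = ∑ k ∈ range (m + 1), T.card.choose k := by
  rw [skeleton_eq_biUnion, card_biUnion fun i _ j _ hij => T.pairwise_disjoint_powersetCard hij]
  simp only [card_powersetCard]

/-- All subsets of an `n`-set except the `n + 1` largest ones. -/
lemma card_skeleton_card_sub_two {T : Finset α} (hT : 2 ≤ T.card) :
    (skeleton T (T.card - 2)).card = 2 ^ T.card - T.card - 1 := by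
  obtain ⟨n, hn⟩ : ∃ n, T.card = n + 2 := ⟨T.card - 2, by omega⟩
  have h := Nat.sum_range_choose (n + 2)
  rw [sum_range_succ, sum_range_succ, Nat.choose_self, Nat.choose_succ_self_right] at h
  rw [card_skeleton, hn, Nat.add_sub_cancel]
  omega

lemma card_filter_mem_skeleton {T : Finset α} {x : α} (hx : x ∈ T) (m : ℕ) :
    ((skeleton T (m + 1)).filter (x ∈ ·)).card = (skeleton (T.erase x) m).card := by
  refine card_nbij' (·.erase x) (insert x) (fun F hF => ?_) (fun F hF => ?_)
    (fun F hF => insert_erase (mem_filter.1 hF).2) (fun F hF => ?_)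
  · simp only [coe_filter, mem_skeleton, Set.mem_ofPred_eq, mem_coe] at hF ⊢
    exact ⟨erase_subset_erase x hF.1.1, by rw [card_erase_of_mem hF.2]; omega⟩
  · simp only [coe_filter, mem_skeleton, Set.mem_ofPred_eq, mem_coe, subset_erase] at hF ⊢
    exact ⟨⟨insert_subset hx hF.1.1, (card_insert_le x F).trans (by omega)⟩, mem_insert_self x F⟩
  · simp only [mem_coe, mem_skeleton, subset_erase] at hF
    exact erase_insert hF.1.2

def bridges (A B : Finset α) (a b : α) : Finset (Finset α) :=
  {{a, b}, A.erase a, B.erase b}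

@[simp]
lemma mem_bridges {A B F : Finset α} {a b : α} :
    F ∈ bridges A B a b ↔ F = {a, b} ∨ F = A.erase a ∨ F = B.erase b := by
  simp [bridges]

lemma bridges_comm (A B : Finset α) (a b : α) : bridges A B a b = bridges B A b a := by
  simp only [bridges, pair_comm a b, pair_comm (A.erase a)]

def bridgedSkeleta (d : ℕ) (A B : Finset α) (a b : α) : Finset (Finset α) :=
  skeleton A (d - 1) ∪ skeleton B (d - 1) ∪ bridges A B a b

section bridgedSkeleta

variable {d : ℕ} {A B : Finset α} {a b : α}

lemma bridgedSkeleta_comm : bridgedSkeleta d A B a b = bridgedSkeleta d B A b a := by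
  rw [bridgedSkeleta, bridgedSkeleta, union_comm (skeleton A _), bridges_comm]

lemma subset_of_mem_bridgedSkeleta (ha : a ∈ A) (hb : b ∈ B) {F : Finset α}
    (hF : F ∈ bridgedSkeleta d A B a b) : F ⊆ A ∪ B := by
  simp only [bridgedSkeleta, mem_union, mem_skeleton, mem_bridges] at hF
  rcases hF with (⟨hF, -⟩ | ⟨hF, -⟩) | rfl | rfl | rfl
  · exact hF.trans subset_union_left
  · exact hF.trans subset_union_right
  · exact insert_subset (mem_union_left _ ha) (singleton_subset_iff.2 (mem_union_right _ hb))
  · exact (erase_subset a A).trans subset_union_left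
  · exact (erase_subset b B).trans subset_union_right

lemma sup_id_bridgedSkeleta (hd : 2 ≤ d) (ha : a ∈ A) (hb : b ∈ B) :
    (bridgedSkeleta d A B a b).sup id = A ∪ B := by
  refine (Finset.sup_le fun F hF => subset_of_mem_bridgedSkeleta ha hb hF).antisymm
    fun x hx => ?_
  have hx' : {x} ∈ bridgedSkeleta d A B a b := by
    simp only [bridgedSkeleta, mem_union, mem_skeleton, singleton_subset_iff, card_singleton]
    exact Or.inl (by rcases mem_union.1 hx with h | h <;> simp [h] <;> omega)
  exact le_sup (f := id) hx' (mem_singleton_self x)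

lemma bridgedSkeleta_downward_closed (hd : 2 ≤ d) (hA : A.card = d + 1) (hB : B.card = d + 1)
    (ha : a ∈ A) (hb : b ∈ B) :
    ∀ X ∈ bridgedSkeleta d A B a b, ∀ Y ⊆ X, Y ∈ bridgedSkeleta d A B a b := by
  intro X hX Y hY
  simp only [bridgedSkeleta, mem_union, mem_bridges] at hX ⊢
  rcases hX with hX | rfl | rfl | rfl
  · exact Or.inl (hX.imp (mem_skeleton_of_subset · hY) (mem_skeleton_of_subset · hY))
  · by_cases haY : a ∈ Y
    · by_cases hbY : b ∈ Y
      · exact Or.inr (Or.inl (hY.antisymm (insert_subset haY (singleton_subset_iff.2 hbY))))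
      · rw [pair_comm, subset_insert_iff_of_notMem hbY] at hY
        exact Or.inl (Or.inl (mem_skeleton_of_subset (by simp [ha]; omega) hY))
    · rw [subset_insert_iff_of_notMem haY] at hY
      exact Or.inl (Or.inr (mem_skeleton_of_subset (by simp [hb]; omega) hY))
  · rcases hY.eq_or_ssubset with rfl | hY
    · simp
    · refine Or.inl (Or.inl (mem_skeleton_of_ssubset (erase_subset a A) ?_ hY))
      rw [card_erase_of_mem ha]; omega
  · rcases hY.eq_or_ssubset with rfl | hY
    · simp
    · refine Or.inl (Or.inr (mem_skeleton_of_ssubset (erase_subset b B) ?_ hY))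
      rw [card_erase_of_mem hb]; omega

lemma disjoint_skeleta_bridges (hd : 1 ≤ d) (hAB : Disjoint A B) (hA : A.card = d + 1)
    (hB : B.card = d + 1) (ha : a ∈ A) (hb : b ∈ B) :
    Disjoint (skeleton A (d - 1) ∪ skeleton B (d - 1)) (bridges A B a b) := by
  rw [disjoint_right]
  intro F hF
  rcases mem_bridges.1 hF with rfl | rfl | rfl
  · simp only [mem_union, mem_skeleton, insert_subset_iff, singleton_subset_iff, not_or]
    exact ⟨fun h => disjoint_left.1 hAB h.1.2 hb, fun h => disjoint_left.1 hAB ha h.1.1⟩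
  all_goals
    simp only [mem_union, mem_skeleton, card_erase_of_mem ha, card_erase_of_mem hb, hA, hB]
    omega

lemma card_bridges (hd : 1 ≤ d) (hAB : Disjoint A B) (hA : A.card = d + 1) (ha : a ∈ A) :
    (bridges A B a b).card = 3 := by
  obtain ⟨x, hx⟩ : (A.erase a).Nonempty := by
    rw [← card_pos, card_erase_of_mem ha, hA]; omega
  refine card_eq_three.2 ⟨_, _, _, fun h => ?_, fun h => ?_, fun h => ?_, rfl⟩
  · exact notMem_erase a A (h ▸ mem_insert_self a {b})
  · exact notMem_erase b B (h ▸ mem_insert_of_mem (mem_singleton_self b))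
  · exact disjoint_left.1 hAB (mem_of_mem_erase hx) (mem_of_mem_erase (h ▸ hx))

lemma card_bridgedSkeleta (hd : 2 ≤ d) (hAB : Disjoint A B) (hA : A.card = d + 1)
    (hB : B.card = d + 1) (ha : a ∈ A) (hb : b ∈ B) :
    (bridgedSkeleta d A B a b).card = 2 * (2 ^ (d + 1) - d - 1) := by
  have hcard {T : Finset α} (hT : T.card = d + 1) :
      (skeleton T (d - 1)).card = 2 ^ (d + 1) - (d + 1) - 1 := by
    have := card_skeleton_card_sub_two (T := T) (by omega)
    rwa [hT, show d + 1 - 2 = d - 1 by omega] at this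
  have hskeleta := card_union_add_card_inter (skeleton A (d - 1)) (skeleton B (d - 1))
  rw [skeleton_inter, disjoint_iff_inter_eq_empty.1 hAB, skeleton_empty, card_singleton,
    hcard hA, hcard hB] at hskeleta
  rw [bridgedSkeleta, card_union_of_disjoint (disjoint_skeleta_bridges (by omega) hAB hA hB ha hb),
    card_bridges (by omega) hAB hA ha]
  have := Nat.lt_two_pow_self (n := d + 1)
  omega

lemma card_filter_mem_bridges (hAB : Disjoint A B) (hb : b ∈ B) {x : α} (hx : x ∈ A) :
    ((bridges A B a b).filter (x ∈ ·)).card = 1 := by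
  have hxB : x ∉ B := disjoint_left.1 hAB hx
  have hxb : x ≠ b := fun h => hxB (h ▸ hb)
  by_cases hxa : x = a
  · subst hxa
    simp [bridges, filter_insert, filter_singleton, hxB]
  · simp [bridges, filter_insert, filter_singleton, hxa, hxb, hx, hxB]

lemma card_filter_mem_bridgedSkeleta_of_mem_left (hd : 2 ≤ d) (hAB : Disjoint A B)
    (hA : A.card = d + 1) (hB : B.card = d + 1) (ha : a ∈ A) (hb : b ∈ B) {x : α} (hx : x ∈ A) :
    ((bridgedSkeleta d A B a b).filter (x ∈ ·)).card = 2 ^ d - d := by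
  have hxB : (skeleton B (d - 1)).filter (x ∈ ·) = ∅ :=
    filter_eq_empty_iff.2 fun F hF hxF => disjoint_left.1 hAB hx ((mem_skeleton.1 hF).1 hxF)
  have hlink : ((skeleton A (d - 1)).filter (x ∈ ·)).card = 2 ^ d - d - 1 := by
    have hAx : (A.erase x).card = d := by rw [card_erase_of_mem hx, hA, Nat.add_sub_cancel]
    have := card_skeleton_card_sub_two (T := A.erase x) (by omega)
    rwa [hAx, ← card_filter_mem_skeleton hx, show d - 2 + 1 = d - 1 by omega] at this
  have hdisj : Disjoint (skeleton A (d - 1)) (bridges A B a b) :=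
    (disjoint_skeleta_bridges (by omega) hAB hA hB ha hb).mono_left subset_union_left
  rw [bridgedSkeleta, filter_union, filter_union, hxB, union_empty,
    card_union_of_disjoint (disjoint_filter_filter hdisj), hlink, card_filter_mem_bridges hAB hb hx]
  have := Nat.lt_two_pow_self (n := d)
  omega

lemma card_filter_mem_bridgedSkeleta (hd : 2 ≤ d) (hAB : Disjoint A B) (hA : A.card = d + 1)
    (hB : B.card = d + 1) (ha : a ∈ A) (hb : b ∈ B) {x : α} (hx : x ∈ A ∪ B) :
    ((bridgedSkeleta d A B a b).filter (x ∈ ·)).card = 2 ^ d - d := by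
  rcases mem_union.1 hx with hx | hx
  · exact card_filter_mem_bridgedSkeleta_of_mem_left hd hAB hA hB ha hb hx
  · rw [bridgedSkeleta_comm]
    exact card_filter_mem_bridgedSkeleta_of_mem_left hd hAB.symm hB hA hb ha hx

end bridgedSkeleta

theorem beyond_construction (d : ℕ) (hd : 2 ≤ d) :
    ∀ S : Finset (Finset ℕ),
      S = ((Finset.Icc 1 (d + 1)).powerset.filter (fun F => F.card ≤ d - 1)) ∪
          ((Finset.Icc (d + 2) (2 * d + 2)).powerset.filter (fun F => F.card ≤ d - 1)) ∪
          {({1, d + 2} : Finset ℕ), Finset.Icc 2 (d + 1), Finset.Icc (d + 3) (2 * d + 2)} →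
      (∀ X ∈ S, ∀ Y ⊆ X, Y ∈ S) ∧
      (S.sup id).card = 2 * (d + 1) ∧
      S.card = 2 * (2 ^ (d + 1) - d - 1) ∧
      (∀ x ∈ S.sup id, 2 ^ d - d ≤ (S.filter (fun e => x ∈ e)).card) ∧
      (∃ x ∈ S.sup id, (S.filter (fun e => x ∈ e)).card = 2 ^ d - d) := by
  rintro S rfl
  set A := Icc 1 (d + 1)
  set B := Icc (d + 2) (2 * d + 2)
  have hA : A.card = d + 1 := by simp [A]
  have hB : B.card = d + 1 := by simp only [B, Nat.card_Icc]; omega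
  have hAB : Disjoint A B := disjoint_left.2 fun x hxA hxB => by simp [A, B] at hxA hxB; omega
  have h1 : 1 ∈ A := by simp [A]
  have h2 : d + 2 ∈ B := by simp only [B, mem_Icc]; omega
  have hS : skeleton A (d - 1) ∪ skeleton B (d - 1) ∪
      {{1, d + 2}, Icc 2 (d + 1), Icc (d + 3) (2 * d + 2)} = bridgedSkeleta d A B 1 (d + 2) := by
    have hA' : Icc 2 (d + 1) = A.erase 1 := by ext; simp [A]; omega
    have hB' : Icc (d + 3) (2 * d + 2) = B.erase (d + 2) := by ext; simp [B]; omega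
    rw [bridgedSkeleta, bridges, hA', hB']
  simp only [skeleton] at hS
  rw [hS, sup_id_bridgedSkeleta hd h1 h2]
  have hdeg {x} (hx : x ∈ A ∪ B) := card_filter_mem_bridgedSkeleta hd hAB hA hB h1 h2 hx
  refine ⟨bridgedSkeleta_downward_closed hd hA hB h1 h2, ?_, card_bridgedSkeleta hd hAB hA hB h1 h2,
    fun x hx => (hdeg hx).ge, ⟨1, mem_union_left _ h1, hdeg (mem_union_left _ h1)⟩⟩
  rw [card_union_of_disjoint hAB, hA, hB, two_mul]
end

section
/- Let M ⊆ ℕ₀ and let ℱ ⊆ ⋃_{m ∈ M} ℕ^{(m)} be an M-complex. Let (w_m)_{m ∈ M} be reals with w_m ≥ w_{m'} whenever m ≤ m'. Then ∑_{m ∈ M} w_m·|ℱ ∩ ℕ^{(m)}| ≥ ∑_{m ∈ M} w_m·|ℛ_M(|ℱ|) ∩ ℕ^{(m)}|. -/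
/-- The colex value of a finite set of naturals: sets of naturals, ordered by
colexicographic order, correspond to natural numbers via binary expansion. -/
def colexVal (A : Finset ℕ) : ℕ := ∑ i ∈ A, 2 ^ i

/-!
Extending `w` to an antitone function on all of `ℕ` and writing it as a telescoping sum reduces
the inequality to a comparison of cumulative level counts: for every `t`, the initial segment
`R` has at most as many sets of size `≤ t` as the complex `F`.

That comparison goes by induction on the levels above `t`. Let `q` be the least level of `M`
above `t` and `A` the colex-first set with size in `M` above `t` that is missing from `R`. The
sets of `R` above `t`, together with `A`, form an initial segment for the levels above `t`, so by
induction `F` has at least as many `q`-sets as there are `q`-sets colex-below `A`. Every set of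
`R` of size `d ≤ t` is colex-below `A`, hence lies in the `(q - d)`-th shadow of those `q`-sets;
Kruskal–Katona and the down-closure of `F` then compare the levels `d ≤ t` one at a time.
-/

open Finset Colex
open scoped FinsetFamily

namespace Finset

section Transfer

variable {α β : Type*} [DecidableEq α] [DecidableEq β]

lemma image_image_shadow {f : α → β} (hf : Function.Injective f) (𝒜 : Finset (Finset α)) :
    (∂ 𝒜).image (image f) = ∂ (𝒜.image (image f)) := by
  ext t
  simp only [mem_shadow_iff, mem_image]
  constructor
  · rintro ⟨_, ⟨s, hs, a, ha, rfl⟩, rfl⟩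
    exact ⟨_, ⟨s, hs, rfl⟩, f a, mem_image_of_mem f ha, (image_erase hf s a).symm⟩
  · rintro ⟨_, ⟨s, hs, rfl⟩, b, hb, rfl⟩
    obtain ⟨a, ha, rfl⟩ := mem_image.1 hb
    exact ⟨s.erase a, ⟨s, hs, a, ha, rfl⟩, image_erase hf s a⟩

lemma image_image_shadow_iterate {f : α → β} (hf : Function.Injective f)
    (𝒜 : Finset (Finset α)) (k : ℕ) :
    (∂^[k] 𝒜).image (image f) = ∂^[k] (𝒜.image (image f)) :=
  Function.Semiconj.iterate_right (image_image_shadow hf) k 𝒜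

omit [DecidableEq α] in
lemma card_image_image {f : α → β} (hf : Function.Injective f) (𝒜 : Finset (Finset α)) :
    #(𝒜.image (image f)) = #𝒜 :=
  card_image_of_injective _ (image_injective hf)

end Transfer

lemma Colex.IsInitSeg.of_image_image {α β : Type*} [LinearOrder α] [LinearOrder β] {f : α → β}
    (hf : StrictMono f) {𝒜 : Finset (Finset α)} {r : ℕ} (h : IsInitSeg (𝒜.image (image f)) r) :
    IsInitSeg 𝒜 r := by
  refine ⟨fun s hs => ?_, fun s t hs ⟨hts, ht⟩ => ?_⟩
  · rw [← card_image_of_injective s hf.injective]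
    exact h.1 (mem_image_of_mem _ hs)
  · refine (image_injective hf.injective).mem_finset_image.1 (h.2 (mem_image_of_mem _ hs) ⟨?_, ?_⟩)
    · exact (toColex_image_lt_toColex_image hf).2 hts
    · rwa [card_image_of_injective t hf.injective]

lemma exists_image_image_val_eq {n : ℕ} {ℬ : Finset (Finset ℕ)} (h : ∀ s ∈ ℬ, ∀ m ∈ s, m < n) :
    ∃ ℬ' : Finset (Finset (Fin n)), ℬ'.image (image Fin.val) = ℬ := by
  refine ⟨univ.filter (image Fin.val · ∈ ℬ), ?_⟩
  ext s
  simp only [mem_image, mem_filter, mem_univ, true_and]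
  refine ⟨?_, fun hs => ⟨s.attachFin (h s hs), by simpa using hs, image_val_attachFin _⟩⟩
  rintro ⟨s', hs', rfl⟩
  exact hs'

theorem iterated_kk_nat {𝒜 𝒞 : Finset (Finset ℕ)} {r k : ℕ}
    (h₁ : (𝒜 : Set (Finset ℕ)).Sized r) (h₂ : #𝒞 ≤ #𝒜) (h₃ : IsInitSeg 𝒞 r) :
    #(∂^[k] 𝒞) ≤ #(∂^[k] 𝒜) := by
  obtain ⟨n, hn⟩ : ∃ n, ∀ s ∈ 𝒜 ∪ 𝒞, ∀ m ∈ s, m < n := ⟨(𝒜 ∪ 𝒞).sup (·.sup id) + 1,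
    fun s hs m hm => Nat.lt_succ_of_le ((le_sup (f := id) hm).trans (le_sup (f := (·.sup id)) hs))⟩
  obtain ⟨𝒜', rfl⟩ := exists_image_image_val_eq fun s hs => hn s (mem_union_left _ hs)
  obtain ⟨𝒞', rfl⟩ := exists_image_image_val_eq fun s hs => hn s (mem_union_right _ hs)
  simp only [← image_image_shadow_iterate Fin.val_injective, card_image_image Fin.val_injective]
    at h₂ ⊢
  refine iterated_kk (fun s hs => ?_) h₂ (h₃.of_image_image Fin.val_strictMono)
  rw [← card_image_of_injective s Fin.val_injective]
  exact h₁ (mem_image_of_mem _ hs)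

lemma Colex.exists_superset_card_eq_toColex_le {α : Type*} [LinearOrder α]
    [LocallyFiniteOrderBot α] {s t : Finset α} {r : ℕ} (hst : toColex s < toColex t)
    (hs : #s ≤ r) (ht : r ≤ #t) : ∃ u, s ⊆ u ∧ #u = r ∧ toColex u ≤ toColex t := by
  obtain ⟨a, hat, has, hlt⟩ := toColex_lt_toColex_iff_exists_forall_lt.1 hst
  -- every set squeezed between `s` and `v` agrees with `t` above `a` and misses `a`
  set v := t.filter (a < ·) ∪ Iio a
  have hav : a ∉ v := by simp [v]
  have hsv : s ⊆ v := fun b hb => by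
    have hba : b ≠ a := fun h => has (h ▸ hb)
    by_cases hbt : b ∈ t
    · rcases hba.lt_or_gt with h | h <;> simp [v, h, hbt]
    · simp [v, hlt b hb hbt]
  have hvt : ∀ u ⊆ v, toColex u < toColex t := fun u huv =>
    toColex_lt_toColex_iff_exists_forall_lt.2 ⟨a, hat, fun h => hav (huv h),
      fun b hb hbt => by simpa [v, hbt] using huv hb⟩
  by_cases hrv : r ≤ #v
  · obtain ⟨u, hsu, huv, hu⟩ := exists_subsuperset_card_eq hsv hs hrv
    exact ⟨u, hsu, hu, (hvt u huv).le⟩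
  · have htv : t ⊆ insert a v := fun b hb => by
      rcases lt_trichotomy b a with h | rfl | h <;> simp [v, *]
    have hcard : #t ≤ #v + 1 := (card_le_card htv).trans (card_insert_le a v)
    have htv' : t = insert a v :=
      eq_of_subset_of_card_le htv (by rw [card_insert_of_notMem hav]; omega)
    exact ⟨t, htv' ▸ hsv.trans (subset_insert a v), by omega, le_rfl⟩

end Finset

lemma colexVal_le_colexVal_iff {A B : Finset ℕ} :
    colexVal A ≤ colexVal B ↔ toColex A ≤ toColex B :=
  geomSum_le_geomSum_iff_toColex_le_toColex le_rfl

lemma colexVal_lt_colexVal_iff {A B : Finset ℕ} :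
    colexVal A < colexVal B ↔ toColex A < toColex B :=
  geomSum_lt_geomSum_iff_toColex_lt_toColex le_rfl

lemma exists_toColex_min_notMem {M : Set ℕ} {m : ℕ} (hm : m ∈ M) (hm₀ : 0 < m)
    (R : Finset (Finset ℕ)) :
    ∃ A, #A ∈ M ∧ A ∉ R ∧ ∀ B, #B ∈ M → B ∉ R → toColex A ≤ toColex B := by
  have hinf : {A : Finset ℕ | #A ∈ M}.Infinite := by
    refine Set.infinite_of_injective_forall_mem (f := fun c => Ico c (c + m)) (fun c c' h => ?_)
      (by simpa using hm)
    replace h : Ico c (c + m) = Ico c' (c' + m) := h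
    have h₁ : c ∈ Ico c' (c' + m) := h ▸ left_mem_Ico.2 (by omega)
    have h₂ : c' ∈ Ico c (c + m) := h ▸ left_mem_Ico.2 (by omega)
    simp only [mem_Ico] at h₁ h₂
    omega
  obtain ⟨A₀, hA₀M, hA₀R⟩ := hinf.exists_notMem_finset R
  set S := {A : Finset ℕ | #A ∈ M ∧ A ∉ R}
  obtain ⟨hAM, hAR⟩ := Function.argminOn_mem colexVal S ⟨A₀, hA₀M, hA₀R⟩
  exact ⟨_, hAM, hAR, fun B hBM hBR =>
    colexVal_le_colexVal_iff.1 (Function.argminOn_le colexVal S ⟨hBM, hBR⟩)⟩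

section LayerCake

variable {ι κ β : Type*} [AddCommGroup β]

lemma sum_eq_nsmul_add_sum_card_filter_le_nsmul (w : ℕ → β) {s : Finset ι} {f : ι → ℕ} {b : ℕ}
    (hb : ∀ i ∈ s, f i ≤ b) :
    ∑ i ∈ s, w (f i) = #s • w b + ∑ n ∈ range b, #(s.filter (f · ≤ n)) • (w n - w (n + 1)) := by
  have hpoint : ∀ i ∈ s,
      w (f i) = w b + ∑ n ∈ range b, if f i ≤ n then w n - w (n + 1) else 0 := by
    intro i hi
    have hIco : (range b).filter (f i ≤ ·) = Ico (f i) b := by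
      ext n; simp only [mem_filter, mem_range, mem_Ico]; omega
    rw [← sum_filter, hIco]
    have := sum_Ico_sub (fun n => -w n) (hb i hi)
    simp only [neg_sub_neg] at this
    rw [this]
    abel
  rw [sum_congr rfl hpoint, sum_add_distrib, sum_const, sum_comm]
  congr 1
  refine sum_congr rfl fun n _ => ?_
  rw [← sum_filter, sum_const]

lemma sum_le_sum_of_card_filter_le [LinearOrder β] [IsOrderedAddMonoid β] {s : Finset ι}
    {t : Finset κ} {f : ι → ℕ} {g : κ → ℕ} {w : ℕ → β} (hw : Antitone w) (hst : #s = #t)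
    (h : ∀ n, #(s.filter (f · ≤ n)) ≤ #(t.filter (g · ≤ n))) :
    ∑ i ∈ s, w (f i) ≤ ∑ i ∈ t, w (g i) := by
  set b := max (s.sup f) (t.sup g)
  rw [sum_eq_nsmul_add_sum_card_filter_le_nsmul w fun i hi => (le_sup hi).trans (le_max_left ..),
    sum_eq_nsmul_add_sum_card_filter_le_nsmul w fun i hi => (le_sup hi).trans (le_max_right ..),
    hst]
  gcongr with n
  · exact sub_nonneg.2 (hw n.le_succ)
  · exact h n

end LayerCake

lemma card_filter_le_add_card_filter_lt {ι : Type*} (s : Finset ι) (f : ι → ℕ) (t : ℕ) :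
    #(s.filter (f · ≤ t)) + #(s.filter (t < f ·)) = #s := by
  simpa only [not_le] using card_filter_add_card_filter_not (s := s) (f · ≤ t)

lemma card_filter_le_eq_sum_card_filter_eq {ι : Type*} (s : Finset ι) (f : ι → ℕ) (t : ℕ) :
    #(s.filter (f · ≤ t)) = ∑ d ∈ range (t + 1), #(s.filter (f · = d)) := by
  rw [card_eq_sum_card_fiberwise (f := f) (t := range (t + 1))
    fun i hi => mem_range.2 (Nat.lt_succ_of_le (mem_filter.1 hi).2)]
  refine sum_congr rfl fun d hd => ?_
  rw [filter_filter]
  congr 1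
  exact filter_congr fun i _ => by have := mem_range.1 hd; constructor <;> omega

structure IsMComplex (M : Set ℕ) (F : Finset (Finset ℕ)) : Prop where
  card_mem : ∀ A ∈ F, #A ∈ M
  mem_of_subset : ∀ ⦃A B⦄, B ∈ F → A ⊆ B → #A ∈ M → A ∈ F

-- `R = ℛ_M(#R)` in the notation of the paper.
structure IsMInitSeg (M : Set ℕ) (R : Finset (Finset ℕ)) : Prop where
  card_mem : ∀ A ∈ R, #A ∈ M
  mem_of_toColex_lt : ∀ ⦃A B⦄, A ∈ R → #B ∈ M → toColex B < toColex A → B ∈ R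

def colexBelow (A : Finset ℕ) (q : ℕ) : Finset (Finset ℕ) :=
  ((range (A.sup id + 1)).powersetCard q).filter (toColex · ≤ toColex A)

section MComplex

variable {M : Set ℕ} {F R : Finset (Finset ℕ)} {A D : Finset ℕ} {q t : ℕ}

lemma mem_colexBelow {B : Finset ℕ} : B ∈ colexBelow A q ↔ #B = q ∧ toColex B ≤ toColex A := by
  refine ⟨fun h => ⟨(mem_powersetCard.1 (mem_filter.1 h).1).2, (mem_filter.1 h).2⟩,
    fun ⟨hB, hBA⟩ => mem_filter.2 ⟨mem_powersetCard.2 ⟨fun b hb => ?_, hB⟩, hBA⟩⟩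
  exact mem_range.2 (Nat.lt_succ_of_le (forall_le_mono hBA (fun a ha => le_sup (f := id) ha) b hb))

lemma isInitSeg_colexBelow : IsInitSeg (colexBelow A q) q :=
  ⟨fun _ hB => (mem_colexBelow.1 hB).1, fun _ _ hB ⟨hCB, hC⟩ =>
    mem_colexBelow.2 ⟨hC, hCB.le.trans (mem_colexBelow.1 hB).2⟩⟩

lemma mem_shadow_iterate_colexBelow (hDA : toColex D < toColex A) (hDq : #D ≤ q) (hqA : q ≤ #A) :
    D ∈ ∂^[q - #D] (colexBelow A q) := by
  obtain ⟨B, hDB, hBq, hBA⟩ := exists_superset_card_eq_toColex_le hDA hDq hqA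
  exact mem_shadow_iterate_iff_exists_mem_card_add.2
    ⟨B, mem_colexBelow.2 ⟨hBq, hBA⟩, hDB, by omega⟩

lemma IsMComplex.filter_lt_card (hF : IsMComplex M F) (t : ℕ) :
    IsMComplex {m ∈ M | t < m} (F.filter (t < #·)) where
  card_mem A hA := ⟨hF.card_mem A (mem_filter.1 hA).1, (mem_filter.1 hA).2⟩
  mem_of_subset _ _ hB hAB hA := mem_filter.2 ⟨hF.mem_of_subset (mem_filter.1 hB).1 hAB hA.1, hA.2⟩

lemma IsMComplex.shadow_iterate_subset (hF : IsMComplex M F) {d : ℕ} (hd : d ∈ M) (hdq : d ≤ q) :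
    ∂^[q - d] (F.filter (#· = q)) ⊆ F.filter (#· = d) := by
  intro D hD
  obtain ⟨B, hB, hDB, hBD⟩ := mem_shadow_iterate_iff_exists_mem_card_add.1 hD
  obtain ⟨hBF, hBq⟩ := mem_filter.1 hB
  have hDd : #D = d := by omega
  exact mem_filter.2 ⟨hF.mem_of_subset hBF hDB (hDd ▸ hd), hDd⟩

lemma IsMInitSeg.filter_lt_card (hR : IsMInitSeg M R) (t : ℕ) :
    IsMInitSeg {m ∈ M | t < m} (R.filter (t < #·)) where
  card_mem A hA := ⟨hR.card_mem A (mem_filter.1 hA).1, (mem_filter.1 hA).2⟩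
  mem_of_toColex_lt _ _ hA hB hBA :=
    mem_filter.2 ⟨hR.mem_of_toColex_lt (mem_filter.1 hA).1 hB.1 hBA, hB.2⟩

lemma IsMInitSeg.insert_of_forall_le (hR : IsMInitSeg M R) (hA : #A ∈ M)
    (hmin : ∀ B, #B ∈ M → B ∉ R → toColex A ≤ toColex B) : IsMInitSeg M (insert A R) where
  card_mem B hB := by
    rcases mem_insert.1 hB with rfl | hB
    exacts [hA, hR.card_mem B hB]
  mem_of_toColex_lt B C hB hC hCB := by
    refine mem_insert_of_mem ?_
    rcases mem_insert.1 hB with rfl | hB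
    · by_contra hCR
      exact (hmin C hC hCR).not_gt hCB
    · exact hR.mem_of_toColex_lt hB hC hCB

lemma IsMInitSeg.toColex_lt_of_notMem (hR : IsMInitSeg M R) (hA : #A ∈ M) (hAR : A ∉ R)
    (hD : D ∈ R) : toColex D < toColex A := by
  refine lt_of_not_ge fun hAD => hAR ?_
  rcases hAD.eq_or_lt with h | h
  · exact toColex_inj.1 h ▸ hD
  · exact hR.mem_of_toColex_lt hD hA h

lemma IsMInitSeg.colexBelow_subset (hR : IsMInitSeg M R) (hA : A ∈ R) (hq : q ∈ M) :
    colexBelow A q ⊆ R := fun B hB => by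
  obtain ⟨hBq, hBA⟩ := mem_colexBelow.1 hB
  rcases hBA.eq_or_lt with h | h
  · exact toColex_inj.1 h ▸ hA
  · exact hR.mem_of_toColex_lt hA (hBq ▸ hq) h

theorem IsMComplex.card_filter_le_of_card_colexBelow_le (hF : IsMComplex M F) (htq : t ≤ q)
    (hqA : q ≤ #A) (hRM : ∀ D ∈ R, #D ∈ M) (hRA : ∀ D ∈ R, toColex D < toColex A)
    (hA : #(colexBelow A q) ≤ #(F.filter (#· = q))) :
    #(R.filter (#· ≤ t)) ≤ #(F.filter (#· ≤ t)) := by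
  rw [card_filter_le_eq_sum_card_filter_eq, card_filter_le_eq_sum_card_filter_eq]
  refine sum_le_sum fun d hd => ?_
  have hdq : d ≤ q := (Nat.lt_succ_iff.1 (mem_range.1 hd)).trans htq
  by_cases hdM : d ∈ M
  · calc #(R.filter (#· = d))
        ≤ #(∂^[q - d] (colexBelow A q)) := card_le_card fun D hD => by
          obtain ⟨hDR, rfl⟩ := mem_filter.1 hD
          exact mem_shadow_iterate_colexBelow (hRA D hDR) hdq hqA
      _ ≤ #(∂^[q - d] (F.filter (#· = q))) :=
          iterated_kk_nat (fun _ hB => (mem_filter.1 hB).2) hA isInitSeg_colexBelow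
      _ ≤ #(F.filter (#· = d)) := card_le_card (hF.shadow_iterate_subset hdM hdq)
  · rw [filter_false_of_mem fun D hD (hDd : #D = d) => hdM (hDd ▸ hRM D hD), card_empty]
    exact Nat.zero_le _

theorem IsMInitSeg.card_filter_le (hR : IsMInitSeg M R) (hF : IsMComplex M F) (hRF : #R ≤ #F)
    (t : ℕ) : #(R.filter (#· ≤ t)) ≤ #(F.filter (#· ≤ t)) := by
  obtain ⟨n, hn⟩ : ∃ n, ∀ A ∈ F, #A ≤ t + n :=
    ⟨F.sup card, fun A hA => (le_sup (f := card) hA).trans (Nat.le_add_left _ _)⟩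
  induction n generalizing M F R t with
  | zero =>
    rw [filter_true_of_mem (p := (#· ≤ t)) hn]
    exact (card_le_card (filter_subset _ R)).trans hRF
  | succ n ih =>
    have hRsplit := card_filter_le_add_card_filter_lt R card t
    have hFsplit := card_filter_le_add_card_filter_lt F card t
    rcases le_or_gt #(F.filter (t < #·)) #(R.filter (t < #·)) with hle | hlt
    · omega
    obtain ⟨A₀, hA₀⟩ := card_pos.1 (Nat.zero_lt_of_lt hlt)
    set M' := {m ∈ M | t < m}
    have hqM' : sInf M' ∈ M' :=
      Nat.sInf_mem ⟨#A₀, hF.card_mem A₀ (mem_filter.1 hA₀).1, (mem_filter.1 hA₀).2⟩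
    set q := sInf M'
    obtain ⟨A, hAM', hAR, hAmin⟩ := exists_toColex_min_notMem hqM' (Nat.zero_lt_of_lt hqM'.2) R
    have hR' : IsMInitSeg M' (insert A (R.filter (t < #·))) :=
      (hR.filter_lt_card t).insert_of_forall_le hAM' fun B hB hBR =>
        hAmin B hB fun h => hBR (mem_filter.2 ⟨h, hB.2⟩)
    have hIH := ih hR' (hF.filter_lt_card t) ((card_insert_le _ _).trans (by omega)) q
      fun B hB => by have := hn B (mem_filter.1 hB).1; have := hqM'.2; omega
    refine hF.card_filter_le_of_card_colexBelow_le hqM'.2.le (Nat.sInf_le hAM') hR.card_mem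
      (fun D => hR.toColex_lt_of_notMem hAM'.1 hAR) ?_
    calc #(colexBelow A q)
        ≤ #((insert A (R.filter (t < #·))).filter (#· ≤ q)) := card_le_card fun B hB =>
          mem_filter.2 ⟨hR'.colexBelow_subset (mem_insert_self _ _) hqM' hB,
            (mem_colexBelow.1 hB).1.le⟩
      _ ≤ #((F.filter (t < #·)).filter (#· ≤ q)) := hIH
      _ ≤ #(F.filter (#· = q)) := card_le_card fun B hB => by
          obtain ⟨⟨hBF, htB⟩, hBq⟩ := mem_filter.1 hB |>.imp_left mem_filter.1
          exact mem_filter.2 ⟨hBF, hBq.antisymm (Nat.sInf_le ⟨hF.card_mem B hBF, htB⟩)⟩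

end MComplex

theorem weighted_katona_general (M : Set ℕ) (F : Finset (Finset ℕ))
    (hFM : ∀ A ∈ F, A.card ∈ M)
    (hFdc : ∀ A : Finset ℕ, ∀ B ∈ F, A ⊆ B → A.card ∈ M → A ∈ F)
    (w : ℕ → ℝ) (hw : ∀ m ∈ M, ∀ m' ∈ M, m ≤ m' → w m' ≤ w m)
    (R : Finset (Finset ℕ)) (hRcard : R.card = F.card)
    (hRM : ∀ A ∈ R, A.card ∈ M)
    (hRinit : ∀ A ∈ R, ∀ B : Finset ℕ, B.card ∈ M → colexVal B < colexVal A → B ∈ R) :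
    ∑ A ∈ R, w A.card ≤ ∑ A ∈ F, w A.card := by
  have hF : IsMComplex M F := ⟨hFM, fun A B hB hAB hA => hFdc A B hB hAB hA⟩
  have hR : IsMInitSeg M R :=
    ⟨hRM, fun A B hA hB hBA => hRinit A hA B hB (colexVal_lt_colexVal_iff.2 hBA)⟩
  set S := (R ∪ F).image card
  have hS : (S : Set ℕ) ⊆ M := by
    simp only [S, coe_image, Set.image_subset_iff]
    intro A hA
    rcases mem_union.1 hA with hA | hA
    exacts [hRM A hA, hFM A hA]
  obtain ⟨W, hW, hwW⟩ := (AntitoneOn.mono hw hS).exists_antitone_extension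
    (S.finite_toSet.image w).bddBelow (S.finite_toSet.image w).bddAbove
  have hwW' : ∀ A ∈ R ∪ F, w #A = W #A := fun A hA => hwW (mem_image_of_mem card hA)
  calc ∑ A ∈ R, w #A = ∑ A ∈ R, W #A := sum_congr rfl fun A hA => hwW' A (mem_union_left F hA)
    _ ≤ ∑ A ∈ F, W #A := sum_le_sum_of_card_filter_le hW hRcard (hR.card_filter_le hF hRcard.le)
    _ = ∑ A ∈ F, w #A := sum_congr rfl fun A hA => (hwW' A (mem_union_right R hA)).symm

/-- Weighted Kruskal–Katona for `M`-complexes: the colex initial segment of the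
same size minimises the total weight. -/
theorem weighted_katona (M : Set ℕ) (F : Finset (Finset ℕ)) (hFne : F.Nonempty)
    (hFM : ∀ A ∈ F, A.card ∈ M)
    (hFdc : ∀ A : Finset ℕ, ∀ B ∈ F, A ⊆ B → A.card ∈ M → A ∈ F)
    (w : ℕ → ℝ) (hw : ∀ m ∈ M, ∀ m' ∈ M, m ≤ m' → w m' ≤ w m)
    (R : Finset (Finset ℕ)) (hRcard : R.card = F.card)
    (hRM : ∀ A ∈ R, A.card ∈ M)
    (hRinit : ∀ A ∈ R, ∀ B : Finset ℕ, B.card ∈ M → colexVal B < colexVal A → B ∈ R) :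
    ∑ A ∈ R, w A.card ≤ ∑ A ∈ F, w A.card :=
  weighted_katona_general M F hFM hFdc w hw R hRcard hRM hRinit
end

section
/- Let m be a nonnegative integer and let 𝒮 be a finite simplicial complex with every vertex of degree at least m+1 and nonempty vertex set V. Then |𝒮| > β(m)·|V|, where β(m) = ∑_{F ∈ ℛ(m+1)} 1/(|F|+1) and ℛ(ℓ) denotes the first ℓ elements of all finite subsets of ℕ in the colex order ◁ (A ◁ B iff max(A △ B) ∈ B). -/
/-!
For a vertex `x`, deleting `x` maps the faces containing `x` bijectively onto the lower set
`memberSubfamily x 𝒮`, which has `deg x ≥ m + 1` members. A weighted Kruskal–Katona inequality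
(for a lower set `𝒜` and a nonincreasing weight `w`, `∑_{A ∈ 𝒜} w |A|` is at least the sum of
`w |A|` over the first `|𝒜|` finsets in colex order) then gives `∑_{F ∋ x} 1/|F| ≥ β(m)`. Summing
over `x` counts every nonempty face exactly once, so `β(m) |V| ≤ |𝒮| - 1`.

The weighted Kruskal–Katona inequality follows by splitting `𝒜` at a vertex into the sets avoiding
it and its link, once one knows `G_w(a + b) ≤ G_w(a) + G_{w(· + 1)}(b)` for `b ≤ a`, where
`G_w = colexInitWeight w`. That numerical inequality comes from the self-similarity
`G_w(2^t + r) = G_w(2^t) + G_{w(· + 1)}(r)`, by a strong induction intertwined with the exchange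
inequality `G_w(2^t) + G_w(e) ≤ G_w(x) + G_w(y)` for `x, y ≤ 2^t`, `x + y = 2^t + e`.
-/

open Finset

theorem Finset.notMem_equivBitIndices_of_lt {t n : ℕ} (hn : n < 2 ^ t) :
    t ∉ equivBitIndices n := fun h => by
  have := Nat.two_pow_le_of_mem_bitIndices (List.mem_toFinset.1 h)
  omega

theorem Finset.equivBitIndices_two_pow_add {t n : ℕ} (hn : n < 2 ^ t) :
    equivBitIndices (2 ^ t + n) = insert t (equivBitIndices n) := by
  apply equivBitIndices.symm.injective
  rw [Equiv.symm_apply_apply, equivBitIndices_symm_apply,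
    sum_insert (notMem_equivBitIndices_of_lt hn), ← equivBitIndices_symm_apply,
    Equiv.symm_apply_apply]

theorem Finset.card_equivBitIndices_two_pow_add {t n : ℕ} (hn : n < 2 ^ t) :
    #(equivBitIndices (2 ^ t + n)) = #(equivBitIndices n) + 1 := by
  rw [equivBitIndices_two_pow_add hn, card_insert_of_notMem (notMem_equivBitIndices_of_lt hn)]

theorem map_range_equivBitIndices_eq {R : Finset (Finset ℕ)} {n : ℕ}
    (hR : ∀ A, A ∈ R ↔ colexVal A < n) : (range n).map equivBitIndices.toEmbedding = R := by
  ext A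
  simp [hR, colexVal]

section AddCommMonoid

variable {K : Type*} [AddCommMonoid K]

/-- `Finset.equivBitIndices` lists the finsets of naturals in colex order, so this is the sum of
`w |A|` over the first `n` of them. -/
def colexInitWeight (w : ℕ → K) (n : ℕ) : K := ∑ k ∈ range n, w #(equivBitIndices k)

@[simp] theorem colexInitWeight_zero (w : ℕ → K) : colexInitWeight w 0 = 0 := by
  simp [colexInitWeight]

@[simp] theorem colexInitWeight_one (w : ℕ → K) : colexInitWeight w 1 = w 0 := by
  simp [colexInitWeight]

theorem colexInitWeight_two_pow_add (w : ℕ → K) {t r : ℕ} (hr : r ≤ 2 ^ t) :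
    colexInitWeight w (2 ^ t + r) =
      colexInitWeight w (2 ^ t) + colexInitWeight (fun j => w (j + 1)) r := by
  rw [colexInitWeight, sum_range_add]
  congr 1
  refine sum_congr rfl fun k hk => ?_
  rw [card_equivBitIndices_two_pow_add (by rw [mem_range] at hk; omega)]

theorem colexInitWeight_two_pow_succ (w : ℕ → K) (t : ℕ) :
    colexInitWeight w (2 ^ (t + 1)) =
      colexInitWeight w (2 ^ t) + colexInitWeight (fun j => w (j + 1)) (2 ^ t) := by
  rw [pow_succ, mul_two, colexInitWeight_two_pow_add w le_rfl]

variable [PartialOrder K] [IsOrderedAddMonoid K]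

theorem colexInitWeight_mono {w : ℕ → K} (hw : 0 ≤ w) : Monotone (colexInitWeight w) :=
  fun _ _ h => sum_le_sum_of_subset_of_nonneg (range_subset_range.2 h) fun _ _ _ => hw _

theorem colexInitWeight_le_colexInitWeight {u v : ℕ → K} (huv : u ≤ v) (n : ℕ) :
    colexInitWeight u n ≤ colexInitWeight v n :=
  sum_le_sum fun _ _ => huv _

end AddCommMonoid

theorem colexInitWeight_sub_le_sub {K : Type*} [AddCommGroup K] [PartialOrder K]
    [IsOrderedAddMonoid K] {u v : ℕ → K} (huv : u ≤ v) {e n : ℕ} (hen : e ≤ n) :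
    colexInitWeight u n - colexInitWeight u e ≤ colexInitWeight v n - colexInitWeight v e := by
  simp only [colexInitWeight, ← sum_range_add_sum_Ico _ hen, add_sub_cancel_left]
  exact sum_le_sum fun _ _ => huv _

section Antitone

variable {K : Type*} [Preorder K] {w : ℕ → K}

theorem Antitone.comp_add_one (hw : Antitone w) : Antitone fun j => w (j + 1) :=
  fun _ _ h => hw (Nat.succ_le_succ h)

theorem Antitone.comp_add_one_le (hw : Antitone w) : (fun j => w (j + 1)) ≤ w :=
  fun j => hw j.le_succ

end Antitone

section Inequalities

variable (K : Type*) [AddCommMonoid K] [Preorder K]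

def SplitIneq (n : ℕ) : Prop :=
  ∀ w : ℕ → K, Antitone w → ∀ a b, b ≤ a → a + b = n →
    colexInitWeight w n ≤ colexInitWeight w a + colexInitWeight (fun j => w (j + 1)) b

def ExchangeIneq (t : ℕ) : Prop :=
  ∀ w : ℕ → K, Antitone w → ∀ x y e, x ≤ 2 ^ t → y ≤ 2 ^ t → x + y = 2 ^ t + e →
    colexInitWeight w (2 ^ t) + colexInitWeight w e ≤ colexInitWeight w x + colexInitWeight w y

theorem exchangeIneq_zero : ExchangeIneq K 0 := by
  intro w _ x y e hx hy hxy
  wlog hyx : y ≤ x generalizing x y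
  · rw [add_comm (colexInitWeight w x)]
    exact this y x hy hx (by omega) (by omega)
  obtain ⟨rfl, rfl⟩ : x = 2 ^ 0 ∧ e = y := by simp only [pow_zero] at *; omega
  rfl

end Inequalities

section OrderedField

variable {K : Type*} [Field K] [LinearOrder K] [IsStrictOrderedRing K]

theorem SplitIneq.subadditive {a b : ℕ} (h : SplitIneq K (a + b)) {w : ℕ → K}
    (hw : Antitone w) : colexInitWeight w (a + b) ≤ colexInitWeight w a + colexInitWeight w b := by
  rcases le_total b a with hba | hab
  · have := colexInitWeight_le_colexInitWeight hw.comp_add_one_le b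
    linarith [h w hw a b hba rfl]
  · have := colexInitWeight_le_colexInitWeight hw.comp_add_one_le a
    linarith [h w hw b a hab (add_comm b a)]

theorem ExchangeIneq.succ {t : ℕ} (hE : ExchangeIneq K t) (hS : ∀ n ≤ 2 ^ t, SplitIneq K n) :
    ExchangeIneq K (t + 1) := by
  intro w hw x y e hx hy hxy
  wlog hyx : y ≤ x generalizing x y
  · rw [add_comm (colexInitWeight w x)]
    exact this y x hy hx (by omega) (by omega)
  have hP : 2 ^ (t + 1) = 2 ^ t + 2 ^ t := by rw [pow_succ, mul_two]
  obtain ⟨x', rfl, hx'⟩ : ∃ x', x = 2 ^ t + x' ∧ x' ≤ 2 ^ t := ⟨x - 2 ^ t, by omega, by omega⟩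
  rw [colexInitWeight_two_pow_succ, colexInitWeight_two_pow_add w hx']
  rcases le_or_gt (2 ^ t) y with hty | hyt
  · obtain ⟨y', rfl, hy'⟩ : ∃ y', y = 2 ^ t + y' ∧ y' ≤ 2 ^ t := ⟨y - 2 ^ t, by omega, by omega⟩
    rw [colexInitWeight_two_pow_add w hy']
    rcases le_or_gt e (2 ^ t) with het | hte
    · obtain rfl : e = x' + y' := by omega
      have := colexInitWeight_sub_le_sub hw.comp_add_one_le het
      linarith [(hS _ het).subadditive hw.comp_add_one]
    · obtain ⟨e', rfl, he'⟩ : ∃ e', e = 2 ^ t + e' ∧ e' ≤ 2 ^ t := ⟨e - 2 ^ t, by omega, by omega⟩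
      rw [colexInitWeight_two_pow_add w he']
      linarith [hE _ hw.comp_add_one x' y' e' hx' hy' (by omega)]
  · -- `w (· + 1) ≤ w` trades the shifted difference for one of `w`, reducing to level `t` for `w`
    have := colexInitWeight_sub_le_sub hw.comp_add_one_le hx'
    linarith [hE w hw y x' e hyt.le hx' (by omega)]

theorem splitIneq_of_forall_lt {n : ℕ} (hS : ∀ m < n, SplitIneq K m)
    (hE : ∀ t, 2 ^ (t + 1) < n → ExchangeIneq K t) : SplitIneq K n := by
  rintro w hw a b hba rfl
  rcases Nat.eq_zero_or_pos b with rfl | hb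
  · simp
  obtain ⟨t, hta, hat⟩ : ∃ t, 2 ^ t ≤ a ∧ a < 2 ^ (t + 1) :=
    ⟨Nat.log 2 a, Nat.pow_log_le_self 2 (by omega), Nat.lt_pow_succ_log_self (by norm_num) a⟩
  have hP : 2 ^ (t + 1) = 2 ^ t + 2 ^ t := by rw [pow_succ, mul_two]
  obtain ⟨r, rfl, hr⟩ : ∃ r, a = 2 ^ t + r ∧ r < 2 ^ t := ⟨a - 2 ^ t, by omega, by omega⟩
  have ha := colexInitWeight_two_pow_add w hr.le
  have h2t := colexInitWeight_two_pow_succ w t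
  rcases le_or_gt (2 ^ t) b with htb | hbt
  · obtain ⟨q, rfl, hq⟩ : ∃ q, b = 2 ^ t + q ∧ q ≤ r := ⟨b - 2 ^ t, by omega, by omega⟩
    have hab := colexInitWeight_two_pow_add w (t := t + 1) (r := r + q) (by omega)
    have htq := colexInitWeight_two_pow_add (fun j => w (j + 1)) (t := t) (r := q) (by omega)
    have := hS (r + q) (by omega) _ hw.comp_add_one r q hq rfl
    rw [show 2 ^ t + r + (2 ^ t + q) = 2 ^ (t + 1) + (r + q) by omega]
    linarith
  rcases le_or_gt (r + b) (2 ^ t) with hrb | hrb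
  · have hab := colexInitWeight_two_pow_add w hrb
    have := (hS (r + b) (by omega)).subadditive hw.comp_add_one
    rw [add_assoc]
    linarith
  · obtain ⟨e, he, het⟩ : ∃ e, r + b = 2 ^ t + e ∧ e ≤ 2 ^ t := ⟨r + b - 2 ^ t, by omega, by omega⟩
    have hab := colexInitWeight_two_pow_add w (t := t + 1) (r := e) (by omega)
    have := hE t (by omega) _ hw.comp_add_one r b e hr.le hbt.le he
    rw [show 2 ^ t + r + b = 2 ^ (t + 1) + e by omega]
    linarith

theorem splitIneq_and_exchangeIneq (n : ℕ) :
    SplitIneq K n ∧ ∀ t, 2 ^ t ≤ n → ExchangeIneq K t := by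
  induction n using Nat.strong_induction_on with
  | _ n ih =>
  have hS : ∀ m < n, SplitIneq K m := fun m hm => (ih m hm).1
  have hE : ∀ t, 2 ^ t < n → ExchangeIneq K t := fun t ht => (ih _ ht).2 t le_rfl
  refine ⟨splitIneq_of_forall_lt hS fun t ht => hE t ?_, fun t ht => ?_⟩
  · exact (Nat.pow_lt_pow_succ one_lt_two).trans ht
  · cases t with
    | zero => exact exchangeIneq_zero K
    | succ t =>
      have ht' : 2 ^ t < n := (Nat.pow_lt_pow_succ one_lt_two).trans_le ht
      exact (hE t ht').succ fun m hm => hS m (hm.trans_lt ht')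

theorem colexInitWeight_add_le {w : ℕ → K} (hw : Antitone w) {a b : ℕ} (hba : b ≤ a) :
    colexInitWeight w (a + b) ≤ colexInitWeight w a + colexInitWeight (fun j => w (j + 1)) b :=
  (splitIneq_and_exchangeIneq (a + b)).1 w hw a b hba rfl

end OrderedField

section Family

variable {α : Type*} [DecidableEq α]

theorem Finset.sum_filter_mem_eq_sum_memberSubfamily {M : Type*} [AddCommMonoid M]
    (𝒜 : Finset (Finset α)) (a : α) (f : ℕ → M) :
    ∑ s ∈ 𝒜 with a ∈ s, f #s = ∑ s ∈ 𝒜.memberSubfamily a, f (#s + 1) := by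
  rw [← image_insert_memberSubfamily, sum_image]
  · refine sum_congr rfl fun s hs => ?_
    rw [card_insert_of_notMem (mem_memberSubfamily.1 hs).2]
  · intro s hs t ht hst
    exact insert_erase_invOn.2.injOn (mem_memberSubfamily.1 hs).2 (mem_memberSubfamily.1 ht).2 hst

theorem Finset.card_memberSubfamily (𝒜 : Finset (Finset α)) (a : α) :
    #(𝒜.memberSubfamily a) = #{s ∈ 𝒜 | a ∈ s} := by
  simpa only [card_eq_sum_ones] using (sum_filter_mem_eq_sum_memberSubfamily 𝒜 a fun _ => 1).symm

theorem Finset.sum_eq_sum_nonMemberSubfamily_add_sum_memberSubfamily {M : Type*}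
    [AddCommMonoid M] (𝒜 : Finset (Finset α)) (a : α) (f : ℕ → M) :
    ∑ s ∈ 𝒜, f #s =
      ∑ s ∈ 𝒜.nonMemberSubfamily a, f #s + ∑ s ∈ 𝒜.memberSubfamily a, f (#s + 1) := by
  rw [← sum_filter_mem_eq_sum_memberSubfamily, nonMemberSubfamily, add_comm,
    sum_filter_add_sum_filter_not]

theorem IsLowerSet.colexInitWeight_card_le_sum {K : Type*} [Field K] [LinearOrder K]
    [IsStrictOrderedRing K] {𝒜 : Finset (Finset α)} (h𝒜 : IsLowerSet (𝒜 : Set (Finset α)))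
    {w : ℕ → K} (hw : Antitone w) : colexInitWeight w #𝒜 ≤ ∑ s ∈ 𝒜, w #s := by
  induction 𝒜 using Finset.memberFamily_induction_on generalizing w with
  | empty => simp
  | singleton_empty => simp
  | subfamily a ih₀ ih₁ =>
    rw [← card_memberSubfamily_add_card_nonMemberSubfamily a, add_comm,
      sum_eq_sum_nonMemberSubfamily_add_sum_memberSubfamily _ a]
    exact (colexInitWeight_add_le hw
      (card_le_card h𝒜.memberSubfamily_subset_nonMemberSubfamily)).trans
      (add_le_add (ih₀ h𝒜.nonMemberSubfamily hw) (ih₁ h𝒜.memberSubfamily hw.comp_add_one))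

theorem Finset.sum_sup_sum_filter_mem_inv_card {K : Type*} [DivisionSemiring K] [CharZero K]
    (𝒮 : Finset (Finset α)) :
    ∑ x ∈ 𝒮.sup id, ∑ s ∈ 𝒮 with x ∈ s, (#s : K)⁻¹ = #(𝒮.erase ∅) := by
  rw [sum_comm' (t' := 𝒮) (s' := id) fun x s => ?_]
  · rw [← sum_erase _ (a := ∅) (by simp), card_eq_sum_ones, Nat.cast_sum]
    refine sum_congr rfl fun s hs => ?_
    have hs : s ≠ ∅ := ne_of_mem_erase hs
    rw [id, sum_const, nsmul_eq_mul, mul_inv_cancel₀ (by simpa using hs), Nat.cast_one]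
  · simp only [mem_filter, id]
    exact ⟨fun h => ⟨h.2.2, h.2.1⟩, fun h => ⟨le_sup (f := id) h.2 h.1, h.2, h.1⟩⟩

end Family

theorem frankl_lower_bound_general (m : ℕ) (S : Finset (Finset ℕ)) (hne : S.Nonempty)
    (hdc : ∀ A ∈ S, ∀ B ⊆ A, B ∈ S)
    (hdeg : ∀ x ∈ S.sup id, m + 1 ≤ (S.filter (fun e => x ∈ e)).card)
    (R : Finset (Finset ℕ)) (hR : ∀ A : Finset ℕ, A ∈ R ↔ colexVal A < m + 1) :
    (∑ F ∈ R, (1 : ℚ) / ((F.card : ℚ) + 1)) * ((S.sup id).card : ℚ) < (S.card : ℚ) := by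
  set w : ℕ → ℚ := fun j => 1 / ((j : ℚ) + 1)
  have hw : Antitone w := fun i j hij => by
    dsimp only [w]
    gcongr
  have hS : IsLowerSet (S : Set (Finset ℕ)) := fun A B hBA hA => hdc A hA B hBA
  have hβ : ∑ F ∈ R, w #F = colexInitWeight w (m + 1) := by
    rw [← map_range_equivBitIndices_eq hR, sum_map]
    rfl
  have hvertex : ∀ x ∈ S.sup id, colexInitWeight w (m + 1) ≤ ∑ F ∈ S with x ∈ F, (#F : ℚ)⁻¹ := by
    intro x hx
    calc colexInitWeight w (m + 1)
        ≤ colexInitWeight w #(S.memberSubfamily x) :=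
          colexInitWeight_mono (fun j => by positivity) (card_memberSubfamily S x ▸ hdeg x hx)
      _ ≤ ∑ s ∈ S.memberSubfamily x, w #s := hS.memberSubfamily.colexInitWeight_card_le_sum hw
      _ = ∑ F ∈ S with x ∈ F, (#F : ℚ)⁻¹ := by
          rw [sum_filter_mem_eq_sum_memberSubfamily S x fun j => (j : ℚ)⁻¹]
          simp only [w, Nat.cast_add_one, one_div]
  obtain ⟨A, hA⟩ := hne
  calc (∑ F ∈ R, (1 : ℚ) / ((F.card : ℚ) + 1)) * ((S.sup id).card : ℚ)
      = ∑ x ∈ S.sup id, colexInitWeight w (m + 1) := by rw [hβ, sum_const, nsmul_eq_mul, mul_comm]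
    _ ≤ ∑ x ∈ S.sup id, ∑ F ∈ S with x ∈ F, (#F : ℚ)⁻¹ := sum_le_sum hvertex
    _ = #(S.erase ∅) := sum_sup_sum_filter_mem_inv_card S
    _ < #S := by exact_mod_cast card_erase_lt_of_mem (hdc A hA ∅ (empty_subset A))

theorem frankl_lower_bound (m : ℕ) (S : Finset (Finset ℕ)) (hne : S.Nonempty)
    (hdc : ∀ A ∈ S, ∀ B ⊆ A, B ∈ S) (hV : (S.sup id).Nonempty)
    (hdeg : ∀ x ∈ S.sup id, m + 1 ≤ (S.filter (fun e => x ∈ e)).card)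
    (R : Finset (Finset ℕ)) (hR : ∀ A : Finset ℕ, A ∈ R ↔ colexVal A < m + 1) :
    (∑ F ∈ R, (1 : ℚ) / ((F.card : ℚ) + 1)) * ((S.sup id).card : ℚ) < (S.card : ℚ) :=
  frankl_lower_bound_general m S hne hdc hdeg R hR
end

section
/- For every positive integer d, ℛ(2^d - 1) = 𝒫([d]) \ {[d]} and β(2^d - 2) = (2^{d+1} - 2)/(d+1), where β(m) = ∑_{F ∈ ℛ(m+1)} 1/(|F|+1) and ℛ(ℓ) denotes the initial segment of length ℓ of finite subsets of ℕ under the colex order. -/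
open Finset

lemma colexVal_range (n : ℕ) : colexVal (range n) = 2 ^ n - 1 := by
  simpa [colexVal] using Nat.geomSum_eq le_rfl n

lemma two_pow_le_colexVal {A : Finset ℕ} {i : ℕ} (hi : i ∈ A) : 2 ^ i ≤ colexVal A :=
  single_le_sum (f := (2 ^ ·)) (fun _ _ ↦ Nat.zero_le _) hi

lemma colexVal_lt_colexVal_of_ssubset {A B : Finset ℕ} (h : A ⊂ B) : colexVal A < colexVal B := by
  obtain ⟨i, hiB, hiA⟩ := exists_of_ssubset h
  exact sum_lt_sum_of_subset h.subset hiB hiA (Nat.two_pow_pos i) fun _ _ _ ↦ Nat.zero_le _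

lemma subset_range_of_colexVal_lt_two_pow {A : Finset ℕ} {d : ℕ} (h : colexVal A < 2 ^ d) :
    A ⊆ range d := fun _ hi ↦
  mem_range.2 <| (Nat.pow_lt_pow_iff_right one_lt_two).1 ((two_pow_le_colexVal hi).trans_lt h)

lemma colexVal_lt_two_pow_sub_one_iff {A : Finset ℕ} {d : ℕ} :
    colexVal A < 2 ^ d - 1 ↔ A ⊂ range d := by
  rw [← colexVal_range]
  refine ⟨fun h ↦ ssubset_of_subset_of_ne ?_ (ne_of_apply_ne colexVal h.ne),
    colexVal_lt_colexVal_of_ssubset⟩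
  apply subset_range_of_colexVal_lt_two_pow
  rw [colexVal_range] at h
  omega

lemma sum_range_choose_succ_succ {K : Type*} [Semiring K] (n : ℕ) :
    ∑ j ∈ range (n + 1), ((n + 1).choose (j + 1) : K) + 1 = 2 ^ (n + 1) := by
  have := congrArg (Nat.cast : ℕ → K) (Nat.sum_range_choose (n + 1))
  rwa [sum_range_succ', Nat.choose_zero_right, Nat.cast_add, Nat.cast_sum, Nat.cast_one,
    Nat.cast_pow, Nat.cast_ofNat] at this

lemma choose_div_add_one {K : Type*} [Field K] [CharZero K] (n j : ℕ) :
    (n.choose j : K) / (j + 1) = ((n + 1).choose (j + 1) : K) / (n + 1) := by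
  rw [div_eq_div_iff (Nat.cast_add_one_ne_zero j) (Nat.cast_add_one_ne_zero n)]
  exact_mod_cast (mul_comm _ _).trans (Nat.add_one_mul_choose_eq n j)

lemma sum_powerset_one_div_card_add_one {K α : Type*} [Field K] [CharZero K] (s : Finset α) :
    ∑ t ∈ s.powerset, 1 / ((t.card : K) + 1) = (2 ^ (s.card + 1) - 1) / (s.card + 1) := by
  rw [sum_powerset_apply_card (fun m ↦ 1 / ((m : K) + 1))]
  simp_rw [nsmul_eq_mul, mul_one_div, choose_div_add_one, ← sum_div]
  rw [← sum_range_choose_succ_succ, add_sub_cancel_right]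

theorem initial_segment_pow_sub_one_general (d : ℕ) (R : Finset (Finset ℕ))
    (hR : ∀ A : Finset ℕ, A ∈ R ↔ colexVal A < 2 ^ d - 1) :
    R = (Finset.range d).powerset.erase (Finset.range d) ∧
    ∑ F ∈ R, (1 : ℚ) / ((F.card : ℚ) + 1) = ((2 : ℚ) ^ (d + 1) - 2) / ((d : ℚ) + 1) := by
  have hR_eq : R = (range d).powerset.erase (range d) := by
    ext A
    rw [hR, colexVal_lt_two_pow_sub_one_iff, mem_erase, mem_powerset, Finset.ssubset_iff_subset_ne,
      and_comm]
  refine ⟨hR_eq, ?_⟩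
  rw [hR_eq, sum_erase_eq_sub (mem_powerset_self _), sum_powerset_one_div_card_add_one,
    card_range]
  ring

theorem initial_segment_pow_sub_one (d : ℕ) (hd : 1 ≤ d) (R : Finset (Finset ℕ))
    (hR : ∀ A : Finset ℕ, A ∈ R ↔ colexVal A < 2 ^ d - 1) :
    R = (Finset.range d).powerset.erase (Finset.range d) ∧
    ∑ F ∈ R, (1 : ℚ) / ((F.card : ℚ) + 1) = ((2 : ℚ) ^ (d + 1) - 2) / ((d : ℚ) + 1) :=
  initial_segment_pow_sub_one_general d R hR
end

section
/- Let 𝒮 be a finite simplicial complex with vertex set V and let f : V → ℕ₀ be a function such that f(x) + d(x) ≥ 6 for every x ∈ V, where d(x) is the degree of x in 𝒮. Then (1/2)·∑_{x ∈ V} f(x) + |𝒮| > (13/4)·|V|. -/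
/-
Since `f x ≥ 6 - min 6 (d x)`, and the empty face, the singletons, the `E` edges and the `T`
triangles are distinct faces, it suffices to show
`12 ∑ min 6 (d x) ≤ 18 |V| + 24 E + 24 T = ∑ₓ (18 + 12 d₂ x + 8 d₃ x)`,
where `dₖ x` counts the `k`-element faces through `x`.  This is a discharging argument: each vertex
sends `2` to every triangle through it, except a deficient vertex (`d₂ = 3`, `d₃ = 2`), which
sends `-1`.  Every vertex can afford this, because a face of size `≥ 4` through `x` forces
`d₂ x, d₃ x ≥ 3` and two triangles through `x` force `d₂ x ≥ 3`.  Every triangle `e` receives a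
nonnegative amount because its vertices are not all deficient: the second triangle `eu` through
a deficient `u ∈ e` meets `e` in an edge, since `u` has only three neighbours; the vertex `z` of
`e` off that edge has a second triangle meeting `e` in some `y ≠ z`, and then `y` lies on the
three triangles `e`, `eu`, `ez`.
-/

open Finset

namespace FinsetComplex

variable {α : Type*} {S : Finset (Finset α)} {x : α} {e e' : Finset α}

theorem slice_zero (hS : IsLowerSet (S : Set (Finset α))) (hne : S.Nonempty) : S # 0 = {∅} := by
  obtain ⟨e, he⟩ := hne
  ext A
  simp only [mem_slice, card_eq_zero, mem_singleton]
  exact ⟨And.right, fun h => ⟨h ▸ hS (empty_subset e) he, h⟩⟩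

variable [DecidableEq α]

def degree (S : Finset (Finset α)) (x : α) : ℕ := #{e ∈ S | x ∈ e}

def faceDegree (S : Finset (Finset α)) (k : ℕ) (x : α) : ℕ := #{e ∈ S # k | x ∈ e}

theorem sum_faceDegree_smul {M : Type*} [AddCommMonoid M] (k : ℕ) (φ : α → M) :
    ∑ x ∈ S.sup id, faceDegree S k x • φ x = ∑ e ∈ S # k, ∑ x ∈ e, φ x := by
  simp_rw [faceDegree, ← sum_const]
  refine sum_comm' fun x e => ?_
  simp only [mem_filter, mem_slice]
  exact ⟨fun h => ⟨h.2.2, h.2.1⟩, fun h => ⟨le_sup (f := id) h.2.1 h.1, h.2, h.1⟩⟩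

theorem sum_faceDegree (k : ℕ) : ∑ x ∈ S.sup id, faceDegree S k x = k * #(S # k) := by
  have h := sum_faceDegree_smul (S := S) k (fun _ => 1)
  simp only [smul_eq_mul, mul_one, ← card_eq_sum_ones] at h
  rw [h, sum_congr rfl fun e he => (mem_slice.1 he).2, sum_const, smul_eq_mul, mul_comm]

theorem sum_card_slice_le (t : Finset ℕ) : ∑ k ∈ t, #(S # k) ≤ #S := by
  rw [← card_biUnion (pairwiseDisjoint_slice.subset (Set.subset_univ _))]
  exact card_le_card (biUnion_subset.2 fun _ _ => slice_subset)

theorem singleton_mem (hS : IsLowerSet (S : Set (Finset α))) (hx : x ∈ S.sup id) : {x} ∈ S := by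
  obtain ⟨e, he, hxe⟩ := mem_sup.1 hx
  exact hS (singleton_subset_iff.2 hxe) he

theorem card_slice_one (hS : IsLowerSet (S : Set (Finset α))) : #(S # 1) = #(S.sup id) := by
  have : S # 1 = (S.sup id).map ⟨singleton, singleton_injective⟩ := by
    ext A
    simp only [mem_slice, card_eq_one, mem_map, Function.Embedding.coeFn_mk]
    constructor
    · rintro ⟨hA, x, rfl⟩
      exact ⟨x, le_sup (f := id) hA (mem_singleton_self x), rfl⟩
    · rintro ⟨x, hx, rfl⟩
      exact ⟨singleton_mem hS hx, x, rfl⟩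
  rw [this, card_map]

theorem card_vertices_add_le (hS : IsLowerSet (S : Set (Finset α))) (hne : S.Nonempty) :
    1 + #(S.sup id) + #(S # 2) + #(S # 3) ≤ #S := by
  have h := sum_card_slice_le (S := S) (range 4)
  simp only [sum_range_succ, sum_range_zero, slice_zero hS hne, card_slice_one hS,
    card_singleton] at h
  omega

theorem card_union_erase_le_faceDegree_two (hS : IsLowerSet (S : Set (Finset α)))
    (he : e ∈ S) (he' : e' ∈ S) (hx : x ∈ e) (hx' : x ∈ e') :
    #((e ∪ e').erase x) ≤ faceDegree S 2 x := by
  refine card_le_card_of_injOn (fun y => {x, y}) (fun y hy => ?_) (fun y hy z hz hyz => ?_)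
  · obtain ⟨hyx, hy⟩ := mem_erase.1 hy
    have hsub : {x, y} ⊆ e ∨ {x, y} ⊆ e' := by
      rcases mem_union.1 hy with h | h
      · exact Or.inl (insert_subset hx (singleton_subset_iff.2 h))
      · exact Or.inr (insert_subset hx' (singleton_subset_iff.2 h))
    rw [mem_coe, mem_filter, mem_slice]
    exact ⟨⟨hsub.elim (hS · he) (hS · he'), card_pair hyx.symm⟩, mem_insert_self x _⟩
  · have hy := (mem_erase.1 hy).1
    have : y ∈ ({x, z} : Finset α) := by
      rw [← show ({x, y} : Finset α) = {x, z} from hyz]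
      exact mem_insert_of_mem (mem_singleton_self y)
    simpa [hy] using this

theorem choose_le_faceDegree (hS : IsLowerSet (S : Set (Finset α))) (he : e ∈ S) (hx : x ∈ e)
    (k : ℕ) : (#e - 1).choose k ≤ faceDegree S (k + 1) x := by
  rw [← card_erase_of_mem hx, ← card_powersetCard]
  refine card_le_card_of_injOn (insert x) (fun A hA => ?_) (fun A hA B hB hAB => ?_)
  · obtain ⟨hAe, hAk⟩ := mem_powersetCard.1 hA
    have hxA : x ∉ A := fun h => (mem_erase.1 (hAe h)).1 rfl
    rw [mem_coe, mem_filter, mem_slice]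
    refine ⟨⟨hS (insert_subset hx (hAe.trans (erase_subset x e))) he, ?_⟩, mem_insert_self x A⟩
    rw [card_insert_of_notMem hxA, hAk]
  · have hxA : x ∉ A := fun h => (mem_erase.1 ((mem_powersetCard.1 hA).1 h)).1 rfl
    have hxB : x ∉ B := fun h => (mem_erase.1 ((mem_powersetCard.1 hB).1 h)).1 rfl
    rw [← erase_insert hxA, ← erase_insert hxB]
    exact congrArg (erase · x) hAB

theorem degree_le_of_forall_card_le_three (h : ∀ e ∈ S, x ∈ e → #e ≤ 3) :
    degree S x ≤ 1 + faceDegree S 2 x + faceDegree S 3 x := by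
  have hsub : {e ∈ S | x ∈ e} ⊆ insert {x} ({e ∈ S # 2 | x ∈ e} ∪ {e ∈ S # 3 | x ∈ e}) := by
    intro e he
    obtain ⟨heS, hxe⟩ := mem_filter.1 he
    have hpos : 0 < #e := card_pos.2 ⟨x, hxe⟩
    have hle := h e heS hxe
    simp only [mem_insert, mem_union, mem_filter, mem_slice]
    interval_cases hc : #e
    · exact Or.inl (eq_singleton_iff_unique_mem.2
        ⟨hxe, fun y hy => card_le_one.1 hc.le y hy x hxe⟩)
    · exact Or.inr (Or.inl ⟨⟨heS, rfl⟩, hxe⟩)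
    · exact Or.inr (Or.inr ⟨⟨heS, rfl⟩, hxe⟩)
  have h1 := card_le_card hsub
  have h2 := card_insert_le {x} ({e ∈ S # 2 | x ∈ e} ∪ {e ∈ S # 3 | x ∈ e})
  have h3 := card_union_le {e ∈ S # 2 | x ∈ e} {e ∈ S # 3 | x ∈ e}
  unfold degree faceDegree
  omega

theorem degree_le_or_three_le (hS : IsLowerSet (S : Set (Finset α))) (x : α) :
    degree S x ≤ 1 + faceDegree S 2 x + faceDegree S 3 x ∨
      3 ≤ faceDegree S 2 x ∧ 3 ≤ faceDegree S 3 x := by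
  by_cases hbig : ∃ e ∈ S, x ∈ e ∧ 4 ≤ #e
  · obtain ⟨e, he, hxe, hcard⟩ := hbig
    have hedges : #e - 1 ≤ faceDegree S 2 x := by
      simpa using choose_le_faceDegree hS he hxe 1
    have htriangles : (#e - 1).choose 2 ≤ faceDegree S 3 x := choose_le_faceDegree hS he hxe 2
    have hchoose : Nat.choose 3 2 ≤ (#e - 1).choose 2 := Nat.choose_le_choose 2 (by omega)
    exact Or.inr ⟨by omega, hchoose.trans htriangles⟩
  · simp only [not_exists, not_and, not_le] at hbig
    exact Or.inl (degree_le_of_forall_card_le_three fun e he hxe => by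
      have := hbig e he hxe; omega)

theorem three_le_faceDegree_two (hS : IsLowerSet (S : Set (Finset α)))
    (h : 2 ≤ faceDegree S 3 x) : 3 ≤ faceDegree S 2 x := by
  obtain ⟨e₁, he₁, e₂, he₂, hne⟩ := one_lt_card.1 (show 1 < faceDegree S 3 x by omega)
  rw [mem_filter, mem_slice] at he₁ he₂
  have hunion : 4 ≤ #(e₁ ∪ e₂) := by
    by_contra! hlt
    exact hne ((eq_of_subset_of_card_le subset_union_left (by omega)).trans
      (eq_of_subset_of_card_le subset_union_right (by omega)).symm)
  have := card_union_erase_le_faceDegree_two hS he₁.1.1 he₂.1.1 he₁.2 he₂.2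
  rw [card_erase_of_mem (mem_union_left _ he₁.2)] at this
  omega

def IsDeficient (S : Finset (Finset α)) (x : α) : Prop :=
  faceDegree S 2 x = 3 ∧ faceDegree S 3 x = 2

instance : DecidablePred (IsDeficient S) := fun _ => instDecidableAnd

def charge (S : Finset (Finset α)) (x : α) : ℤ := if IsDeficient S x then -1 else 2

theorem twelve_mul_min_degree_add_le (hS : IsLowerSet (S : Set (Finset α))) (x : α) :
    12 * ((min 6 (degree S x) : ℕ) : ℤ) + faceDegree S 3 x * charge S x ≤
      18 + 12 * faceDegree S 2 x + 8 * faceDegree S 3 x := by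
  have h₁ := degree_le_or_three_le hS x
  have h₂ := three_le_faceDegree_two hS (x := x)
  rw [charge]
  split_ifs with hx <;> unfold IsDeficient at hx <;> omega

theorem exists_ne_mem_of_isDeficient (hx : IsDeficient S x) (e : Finset α) :
    ∃ e' ∈ S # 3, x ∈ e' ∧ e' ≠ e := by
  obtain ⟨e', he', hne⟩ := exists_mem_ne (s := {e ∈ S # 3 | x ∈ e})
    (by unfold IsDeficient faceDegree at hx; omega) e
  exact ⟨e', (mem_filter.1 he').1, (mem_filter.1 he').2, hne⟩

theorem two_le_card_inter (hS : IsLowerSet (S : Set (Finset α))) (hx : faceDegree S 2 x ≤ 3)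
    (he : e ∈ S # 3) (he' : e' ∈ S # 3) (hxe : x ∈ e) (hxe' : x ∈ e') : 2 ≤ #(e ∩ e') := by
  rw [mem_slice] at he he'
  have h := card_union_erase_le_faceDegree_two hS he.1 he'.1 hxe hxe'
  rw [card_erase_of_mem (mem_union_left _ hxe)] at h
  have := card_union_add_card_inter e e'
  omega

theorem not_forall_isDeficient (hS : IsLowerSet (S : Set (Finset α))) (he : e ∈ S # 3) :
    ¬ ∀ x ∈ e, IsDeficient S x := by
  intro hdef
  have he₃ := (mem_slice.1 he).2
  obtain ⟨u, hu⟩ : e.Nonempty := card_pos.1 (by omega)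
  obtain ⟨eu, heu, hueu, heu_ne⟩ := exists_ne_mem_of_isDeficient (hdef u hu) e
  obtain ⟨z, hz, hzeu⟩ : ∃ z ∈ e, z ∉ eu := not_subset.1 fun hsub =>
    heu_ne (eq_of_subset_of_card_le hsub (by rw [(mem_slice.1 heu).2, he₃])).symm
  obtain ⟨ez, hez, hzez, hez_ne⟩ := exists_ne_mem_of_isDeficient (hdef z hz) e
  have hinter : e ∩ eu = e.erase z := by
    refine eq_of_subset_of_card_le (fun y hy => ?_) ?_
    · exact mem_erase.2 ⟨fun h => hzeu (h ▸ (mem_inter.1 hy).2), (mem_inter.1 hy).1⟩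
    · rw [card_erase_of_mem hz, he₃]
      exact two_le_card_inter hS (hdef u hu).1.le he heu hu hueu
  obtain ⟨y, hy, hyz⟩ : ∃ y ∈ e ∩ ez, y ≠ z :=
    exists_mem_ne (two_le_card_inter hS (hdef z hz).1.le he hez hz hzez) z
  obtain ⟨hye, hyez⟩ := mem_inter.1 hy
  have hyeu : y ∈ eu := (mem_inter.1 (hinter ▸ mem_erase.2 ⟨hyz, hye⟩)).2
  have hsub : {e, eu, ez} ⊆ {e ∈ S # 3 | y ∈ e} := by
    intro t ht
    simp only [mem_insert, mem_singleton] at ht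
    rcases ht with rfl | rfl | rfl <;> exact mem_filter.2 ⟨by assumption, by assumption⟩
  have hthree : #({e, eu, ez} : Finset (Finset α)) = 3 :=
    card_eq_three.2 ⟨e, eu, ez, heu_ne.symm, hez_ne.symm, fun h => hzeu (h ▸ hzez), rfl⟩
  have hle := card_le_card hsub
  have hdeg := (hdef y hye).2
  unfold faceDegree at hdeg
  omega

theorem sum_charge_nonneg (hS : IsLowerSet (S : Set (Finset α))) (he : e ∈ S # 3) :
    0 ≤ ∑ x ∈ e, charge S x := by
  obtain ⟨z, hz, hzdef⟩ : ∃ z ∈ e, ¬ IsDeficient S z := by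
    simpa using not_forall_isDeficient hS he
  have hlow : ∀ x ∈ e.erase z, (-1 : ℤ) ≤ charge S x := fun x _ => by
    unfold charge; split_ifs <;> norm_num
  have hrest := card_nsmul_le_sum _ _ _ hlow
  rw [card_erase_of_mem hz, (mem_slice.1 he).2] at hrest
  rw [← add_sum_erase e _ hz, charge, if_neg hzdef]
  norm_num at hrest
  linarith

theorem twelve_mul_sum_min_degree_le (hS : IsLowerSet (S : Set (Finset α))) :
    12 * ∑ x ∈ S.sup id, min 6 (degree S x) ≤
      18 * #(S.sup id) + 24 * #(S # 2) + 24 * #(S # 3) := by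
  have hcharge : 0 ≤ ∑ x ∈ S.sup id, (faceDegree S 3 x : ℤ) * charge S x := by
    simp_rw [← nsmul_eq_mul]
    rw [sum_faceDegree_smul]
    exact sum_nonneg fun e he => sum_charge_nonneg hS he
  have hlocal := sum_le_sum fun x (_ : x ∈ S.sup id) => twelve_mul_min_degree_add_le hS x
  have h₂ := sum_faceDegree (S := S) 2
  have h₃ := sum_faceDegree (S := S) 3
  simp only [sum_add_distrib, ← mul_sum, sum_const, nsmul_eq_mul] at hlocal
  zify at h₂ h₃ ⊢
  push_cast at h₂ h₃ hlocal ⊢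
  linarith

end FinsetComplex

theorem alpha_five_generalised (S : Finset (Finset ℕ)) (hne : S.Nonempty)
    (hdc : ∀ A ∈ S, ∀ B ⊆ A, B ∈ S) (f : ℕ → ℕ)
    (hf : ∀ x ∈ S.sup id, 6 ≤ f x + (S.filter (fun e => x ∈ e)).card) :
    (13 / 4 : ℚ) * (((S.sup id).card : ℚ)) <
      (1 / 2 : ℚ) * (∑ x ∈ S.sup id, (f x : ℚ)) + (S.card : ℚ) := by
  have hS : IsLowerSet (S : Set (Finset ℕ)) := fun A B hBA hA => hdc A hA B hBA
  have hcount := FinsetComplex.card_vertices_add_le hS hne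
  have hcharge := FinsetComplex.twelve_mul_sum_min_degree_le hS
  have hfsum : ∑ x ∈ S.sup id, 6 ≤ ∑ x ∈ S.sup id, (f x + min 6 (FinsetComplex.degree S x)) :=
    sum_le_sum fun x hx => by have := hf x hx; unfold FinsetComplex.degree; omega
  rw [sum_const, smul_eq_mul, sum_add_distrib] at hfsum
  qify at hcount hcharge hfsum
  linarith
end

section
/- Every finite simplicial complex 𝒮 with minimum degree δ(𝒮) ≥ 6 and nonempty vertex set satisfies |𝒮| > (13/4)·|V(𝒮)|. Moreover this constant is optimal: there is a simplicial complex 𝒮 with δ(𝒮) ≥ 6 and (|𝒮| - 1)/|V(𝒮)| = 13/4 (namely 𝒫([4]) with the top set and one 3-set removed). -/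
/-!
Discharging. Give each singleton, edge and triangle charge `24`. A vertex `x` with `d` edges and
`t` triangles through it collects `24` from its singleton, `12` from each edge and, from each
triangle, `9` if `(d, t) = (3, 2)` and `6` otherwise. Its star injects into the subsets of its
`d` neighbours, so `d ≥ 3`; if the star contains no face of size `4` it has at most `1 + d + t`
members, and otherwise `t ≥ choose 3 2 = 3`. Either way `x` collects at least `54`. No triangle
is overdrawn: the two triangles through a vertex with `(d, t) = (3, 2)` share a second vertex,
which then lies on the same two triangles, so if all three vertices of a triangle `T` had
`(d, t) = (3, 2)`, both triangles through them would contain `T`. Hence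
`54 |V| ≤ 24 (|V| + |E| + |T|) ≤ 24 (|𝒮| - 1)`, the `1` being the empty face.
-/

open Finset

theorem Finset.apply_eq_apply_of_card_le_three {α β : Type*} {s : Finset α} {f : α → β}
    (hs : #s ≤ 3) (h : ∀ v ∈ s, ∃ w ∈ s, w ≠ v ∧ f w = f v) : ∀ v ∈ s, ∀ w ∈ s, f v = f w := by
  classical
  have hfiber : ∀ u ∈ s, 2 ≤ #{a ∈ s | f a = f u} := fun u hu => by
    obtain ⟨u', hu', hu'u, hfu'⟩ := h u hu
    exact one_lt_card.2 ⟨u, mem_filter.2 ⟨hu, rfl⟩, u', mem_filter.2 ⟨hu', hfu'⟩, hu'u.symm⟩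
  intro v hv w hw
  by_contra hvw
  have hdisj : Disjoint {a ∈ s | f a = f v} {a ∈ s | f a = f w} :=
    disjoint_filter.2 fun a _ hav haw => hvw (hav.symm.trans haw)
  have hunion := card_le_card (union_subset (filter_subset (f · = f v) s)
    (filter_subset (f · = f w) s))
  rw [card_union_of_disjoint hdisj] at hunion
  have hv2 := hfiber v hv
  have hw2 := hfiber w hw
  omega

theorem Finset.sum_card_filter_mem_nsmul {α M : Type*} [DecidableEq α] [AddCommMonoid M]
    {V : Finset α} {F : Finset (Finset α)} (hF : ∀ e ∈ F, e ⊆ V) (w : α → M) :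
    ∑ x ∈ V, #{e ∈ F | x ∈ e} • w x = ∑ e ∈ F, ∑ x ∈ e, w x := by
  simp only [← sum_const]
  exact sum_comm' fun x e => by
    simp only [mem_filter]
    exact ⟨fun ⟨hx, he, hxe⟩ => ⟨hxe, he⟩, fun ⟨hxe, he⟩ => ⟨hF e he hxe, he, hxe⟩⟩

theorem Finset.sum_card_slice_range_le {α : Type*} (S : Finset (Finset α)) (n : ℕ) :
    ∑ r ∈ range n, #(S # r) ≤ #S := by
  classical
  rw [← card_biUnion (pairwiseDisjoint_slice.subset (Set.subset_univ _))]
  exact card_le_card (biUnion_subset.2 fun _ _ => slice_subset)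

namespace DownClosedFamily

variable {α : Type*} [DecidableEq α] {S : Finset (Finset α)} {F : Finset α} {x : α}

def facesAt (S : Finset (Finset α)) (k : ℕ) (x : α) : Finset (Finset α) := {e ∈ S # k | x ∈ e}

theorem mem_facesAt {e : Finset α} {k : ℕ} : e ∈ facesAt S k x ↔ e ∈ S ∧ #e = k ∧ x ∈ e := by
  simp [facesAt, mem_slice, and_assoc]

def neighbors (S : Finset (Finset α)) (x : α) : Finset α := (facesAt S 2 x).biUnion (·.erase x)

theorem card_neighbors_le : #(neighbors S x) ≤ #(facesAt S 2 x) := calc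
  #(neighbors S x) ≤ ∑ e ∈ facesAt S 2 x, #(e.erase x) := card_biUnion_le
  _ = ∑ _e ∈ facesAt S 2 x, 1 := sum_congr rfl fun e he => by
    obtain ⟨-, he2, hxe⟩ := mem_facesAt.1 he
    rw [card_erase_of_mem hxe, he2]
  _ = #(facesAt S 2 x) := (card_eq_sum_ones _).symm

theorem erase_subset_neighbors (hS : IsLowerSet (S : Set (Finset α))) (hF : F ∈ S) (hx : x ∈ F) :
    F.erase x ⊆ neighbors S x := fun y hy => by
  obtain ⟨hyx, hyF⟩ := mem_erase.1 hy
  refine mem_biUnion.2 ⟨{x, y}, mem_facesAt.2 ⟨hS ?_ hF, card_pair hyx.symm, mem_insert_self x _⟩,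
    by simp [hyx]⟩
  simp [insert_subset_iff, hx, hyF]

theorem card_star_le_two_pow (hS : IsLowerSet (S : Set (Finset α))) (x : α) :
    #{e ∈ S | x ∈ e} ≤ 2 ^ #(facesAt S 2 x) := calc
  #{e ∈ S | x ∈ e} ≤ #((neighbors S x).powerset.image (insert x)) := card_le_card fun F hF => by
    obtain ⟨hFS, hxF⟩ := mem_filter.1 hF
    exact mem_image.2 ⟨F.erase x, mem_powerset.2 (erase_subset_neighbors hS hFS hxF),
      insert_erase hxF⟩
  _ ≤ 2 ^ #(neighbors S x) := card_image_le.trans (card_powerset _).le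
  _ ≤ 2 ^ #(facesAt S 2 x) := Nat.pow_le_pow_right two_pos card_neighbors_le

theorem card_star_le_of_forall_card_le_three (h : ∀ F ∈ S, x ∈ F → #F ≤ 3) :
    #{e ∈ S | x ∈ e} ≤ 1 + #(facesAt S 2 x) + #(facesAt S 3 x) := calc
  #{e ∈ S | x ∈ e} ≤ #(insert {x} (facesAt S 2 x ∪ facesAt S 3 x)) := card_le_card fun F hF => by
    obtain ⟨hFS, hxF⟩ := mem_filter.1 hF
    have hF1 : 1 ≤ #F := card_pos.2 ⟨x, hxF⟩
    have hF3 := h F hFS hxF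
    simp only [mem_insert, mem_union, mem_facesAt]
    by_cases h1 : #F = 1
    · exact Or.inl (eq_of_subset_of_card_le (singleton_subset_iff.2 hxF) (by simp [h1])).symm
    · have hF23 : #F = 2 ∨ #F = 3 := by omega
      tauto
  _ ≤ 1 + #(facesAt S 2 x) + #(facesAt S 3 x) := by
    have hunion := card_union_le (facesAt S 2 x) (facesAt S 3 x)
    have hinsert := card_insert_le {x} (facesAt S 2 x ∪ facesAt S 3 x)
    omega

theorem choose_le_card_facesAt (hS : IsLowerSet (S : Set (Finset α))) (hF : F ∈ S) (hx : x ∈ F)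
    (k : ℕ) : (#F - 1).choose k ≤ #(facesAt S (k + 1) x) := by
  rw [← card_erase_of_mem hx, ← card_powersetCard]
  refine card_le_card_of_injOn (insert x) (fun G hG => ?_) fun G hG H hH hGH => ?_
  · obtain ⟨hGF, hGk⟩ := mem_powersetCard.1 (mem_coe.1 hG)
    have hxG : x ∉ G := fun h => (mem_erase.1 (hGF h)).1 rfl
    exact mem_facesAt.2 ⟨hS (insert_subset hx (hGF.trans (erase_subset x F))) hF,
      by rw [card_insert_of_notMem hxG, hGk], mem_insert_self x G⟩
  · have hxG : x ∉ G := fun h => (mem_erase.1 ((mem_powersetCard.1 (mem_coe.1 hG)).1 h)).1 rfl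
    have hxH : x ∉ H := fun h => (mem_erase.1 ((mem_powersetCard.1 (mem_coe.1 hH)).1 h)).1 rfl
    rw [← erase_insert hxG, ← erase_insert hxH, hGH]

def IsDeficient (S : Finset (Finset α)) (x : α) : Prop :=
  #(facesAt S 2 x) = 3 ∧ #(facesAt S 3 x) = 2

instance (S : Finset (Finset α)) : DecidablePred (IsDeficient S) :=
  fun _ => inferInstanceAs (Decidable (_ ∧ _))

def triangleCharge (S : Finset (Finset α)) (x : α) : ℕ := if IsDeficient S x then 9 else 6

theorem fifty_four_le_charge (hS : IsLowerSet (S : Set (Finset α)))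
    (hx : 6 ≤ #{e ∈ S | x ∈ e}) :
    54 ≤ #(facesAt S 2 x) * 12 + #(facesAt S 3 x) * triangleCharge S x := by
  have hd : 3 ≤ #(facesAt S 2 x) := by
    by_contra! h
    have hstar := (card_star_le_two_pow hS x).trans
      (Nat.pow_le_pow_right two_pos (Nat.le_of_lt_succ h))
    omega
  have ht : 5 ≤ #(facesAt S 2 x) + #(facesAt S 3 x) ∨ 3 ≤ #(facesAt S 3 x) := by
    by_cases hbig : ∃ F ∈ S, x ∈ F ∧ 4 ≤ #F
    · obtain ⟨F, hF, hxF, h4⟩ := hbig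
      right
      calc 3 = (4 - 1).choose 2 := rfl
        _ ≤ (#F - 1).choose 2 := Nat.choose_le_choose 2 (by omega)
        _ ≤ #(facesAt S 3 x) := choose_le_card_facesAt hS hF hxF 2
    · push Not at hbig
      have hstar := card_star_le_of_forall_card_le_three fun F hF hxF =>
        Nat.le_of_lt_succ (hbig F hF hxF)
      omega
  by_cases hdef : IsDeficient S x
  · rw [triangleCharge, if_pos hdef, hdef.1, hdef.2]
  · simp only [triangleCharge, if_neg hdef]
    unfold IsDeficient at hdef
    omega

theorem IsDeficient.exists_ne_facesAt_subset (hS : IsLowerSet (S : Set (Finset α)))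
    (hx : IsDeficient S x) : ∃ p ≠ x, facesAt S 3 x ⊆ facesAt S 3 p := by
  obtain ⟨A, B, -, hfaces⟩ := card_eq_two.1 hx.2
  have hA : A ∈ facesAt S 3 x := by simp [hfaces]
  have hB : B ∈ facesAt S 3 x := by simp [hfaces]
  obtain ⟨hAS, hA3, hxA⟩ := mem_facesAt.1 hA
  obtain ⟨hBS, hB3, hxB⟩ := mem_facesAt.1 hB
  have hunion : #((A ∪ B).erase x) ≤ 3 := by
    rw [erase_union_distrib]
    calc _ ≤ #(neighbors S x) := card_le_card (union_subset (erase_subset_neighbors hS hAS hxA)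
            (erase_subset_neighbors hS hBS hxB))
      _ ≤ 3 := hx.1 ▸ card_neighbors_le
  have hinter : 1 < #(A ∩ B) := by
    have hunion_inter := card_union_add_card_inter A B
    have herase := card_erase_of_mem (mem_union_left B hxA)
    omega
  obtain ⟨p, hp, hpx⟩ := exists_mem_ne hinter x
  refine ⟨p, hpx, fun U hU => ?_⟩
  obtain ⟨hUS, hU3, -⟩ := mem_facesAt.1 hU
  have hpU : p ∈ U := by
    rw [hfaces, mem_insert, mem_singleton] at hU
    rcases hU with rfl | rfl
    exacts [(mem_inter.1 hp).1, (mem_inter.1 hp).2]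
  exact mem_facesAt.2 ⟨hUS, hU3, hpU⟩

theorem not_forall_isDeficient (hS : IsLowerSet (S : Set (Finset α))) {T : Finset α}
    (hT : T ∈ S # 3) : ¬ ∀ v ∈ T, IsDeficient S v := by
  intro hdef
  obtain ⟨hTS, hT3⟩ := mem_slice.1 hT
  have hpartner : ∀ v ∈ T, ∃ w ∈ T, w ≠ v ∧ facesAt S 3 w = facesAt S 3 v := fun v hv => by
    obtain ⟨p, hpv, hsub⟩ := (hdef v hv).exists_ne_facesAt_subset hS
    have hpT : p ∈ T := (mem_facesAt.1 (hsub (mem_facesAt.2 ⟨hTS, hT3, hv⟩))).2.2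
    refine ⟨p, hpT, hpv, (eq_of_subset_of_card_le hsub ?_).symm⟩
    rw [(hdef p hpT).2, (hdef v hv).2]
  have hconst := apply_eq_apply_of_card_le_three hT3.le hpartner
  obtain ⟨v, hv⟩ : T.Nonempty := card_pos.1 (by omega)
  have hsingle : facesAt S 3 v ⊆ {T} := fun U hU => by
    have hTU : T ⊆ U := fun w hw => (mem_facesAt.1 (hconst v hv w hw ▸ hU)).2.2
    rw [mem_singleton]
    exact (eq_of_subset_of_card_le hTU (by rw [hT3, (mem_facesAt.1 hU).2.1])).symm
  have hle := card_le_card hsingle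
  rw [(hdef v hv).2, card_singleton] at hle
  omega

theorem sum_triangleCharge_le (hS : IsLowerSet (S : Set (Finset α))) {T : Finset α}
    (hT : T ∈ S # 3) : ∑ x ∈ T, triangleCharge S x ≤ 24 := by
  have hT3 := (mem_slice.1 hT).2
  have hdef : #{v ∈ T | IsDeficient S v} ≤ 2 := by
    by_contra! h
    exact not_forall_isDeficient hS hT
      (card_filter_eq_iff.1 (le_antisymm (card_filter_le _ _) (by rw [hT3]; exact h)))
  have hsplit := card_filter_add_card_filter_not (s := T) (fun v => IsDeficient S v)
  simp only [triangleCharge, sum_ite, sum_const, smul_eq_mul]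
  omega

theorem one_add_card_sup_add_le (hS : IsLowerSet (S : Set (Finset α))) (hne : S.Nonempty) :
    1 + #(S.sup id) + #(S # 2) + #(S # 3) ≤ #S := by
  have h0 : 1 ≤ #(S # 0) := by
    obtain ⟨A, hA⟩ := hne
    exact card_pos.2 ⟨∅, mem_slice.2 ⟨hS (empty_subset A) hA, card_empty⟩⟩
  have h1 : #(S.sup id) ≤ #(S # 1) := card_le_card_of_injOn (fun y => {y}) (fun y hy => by
      obtain ⟨e, he, hye⟩ := mem_sup.1 (mem_coe.1 hy)
      exact mem_slice.2 ⟨hS (singleton_subset_iff.2 hye) he, card_singleton y⟩)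
    singleton_injective.injOn
  have hslices := sum_card_slice_range_le S 4
  simp only [sum_range_succ, sum_range_zero] at hslices
  omega

theorem thirteen_mul_card_sup_lt (hS : IsLowerSet (S : Set (Finset α))) (hne : S.Nonempty)
    (hδ : ∀ x ∈ S.sup id, 6 ≤ #{e ∈ S | x ∈ e}) : 13 * #(S.sup id) < 4 * #S := by
  have hsub : ∀ k, ∀ e ∈ S # k, e ⊆ S.sup id := fun _ e he => le_sup (f := id) (slice_subset he)
  have hedges : ∑ x ∈ S.sup id, #(facesAt S 2 x) * 12 = 24 * #(S # 2) := calc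
    _ = ∑ e ∈ S # 2, ∑ _x ∈ e, 12 := sum_card_filter_mem_nsmul (hsub 2) fun _ => 12
    _ = ∑ _e ∈ S # 2, 24 := sum_congr rfl fun e he => by rw [sum_const, (mem_slice.1 he).2]; rfl
    _ = 24 * #(S # 2) := by rw [sum_const, smul_eq_mul, mul_comm]
  have htriangles : ∑ x ∈ S.sup id, #(facesAt S 3 x) * triangleCharge S x ≤ 24 * #(S # 3) := calc
    _ = ∑ T ∈ S # 3, ∑ x ∈ T, triangleCharge S x :=
      sum_card_filter_mem_nsmul (hsub 3) (triangleCharge S)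
    _ ≤ ∑ _T ∈ S # 3, 24 := sum_le_sum fun T hT => sum_triangleCharge_le hS hT
    _ = 24 * #(S # 3) := by rw [sum_const, smul_eq_mul, mul_comm]
  have hcharge := sum_le_sum fun x hx => fifty_four_le_charge hS (hδ x hx)
  rw [sum_add_distrib, hedges, sum_const, smul_eq_mul] at hcharge
  have hcard := one_add_card_sup_add_le hS hne
  omega

end DownClosedFamily

def optimalExample : Finset (Finset ℕ) := (range 4).powerset \ {range 4, {1, 2, 3}}

theorem isLowerSet_optimalExample : IsLowerSet (optimalExample : Set (Finset ℕ)) := by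
  have h : ∀ A ∈ optimalExample, ∀ B ∈ A.powerset, B ∈ optimalExample := by decide
  exact fun A B hBA hA => h A hA B (mem_powerset.2 hBA)

theorem sup_optimalExample : optimalExample.sup id = range 4 := by decide

theorem card_optimalExample : #optimalExample = 14 := by decide

theorem alpha_five :
    (∀ S : Finset (Finset ℕ), S.Nonempty → (∀ A ∈ S, ∀ B ⊆ A, B ∈ S) →
      (S.sup id).Nonempty →
      (∀ x ∈ S.sup id, 6 ≤ (S.filter (fun e => x ∈ e)).card) →
      (13 / 4 : ℚ) * ((S.sup id).card : ℚ) < (S.card : ℚ)) ∧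
    (∃ S : Finset (Finset ℕ), S.Nonempty ∧ (∀ A ∈ S, ∀ B ⊆ A, B ∈ S) ∧
      (S.sup id).Nonempty ∧
      (∀ x ∈ S.sup id, 6 ≤ (S.filter (fun e => x ∈ e)).card) ∧
      ((S.card : ℚ) - 1) / ((S.sup id).card : ℚ) = 13 / 4) := by
  refine ⟨fun S hne hS _ hδ => ?_, optimalExample, by decide,
    fun A hA B hBA => isLowerSet_optimalExample hBA hA, ?_, ?_, ?_⟩
  · have h : (13 * #(S.sup id) : ℚ) < 4 * #S := by
      exact_mod_cast DownClosedFamily.thirteen_mul_card_sup_lt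
        (fun A B hBA hA => hS A hA B hBA) hne hδ
    linarith
  · rw [sup_optimalExample]
    exact ⟨0, by simp⟩
  · rw [sup_optimalExample]
    decide
  · rw [sup_optimalExample, card_optimalExample, card_range]
    norm_num
end
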